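/- arXiv:1712.07865 — 5 statements merged into one kernel-verified Lean document; each statement's English description precedes it below -/
import Mathlib

section
/- Let F be a Finsler metric with fundamental tensor g_{ij}, let β = b_i y^i be a 1-form, m ∈ ℝ with m ≠ 0 and m ≠ −1, and let F̄ = F^{m+1}/β^m + β. Then the fundamental tensor of F̄ equals ḡ_{ij} = (m+1)(F^{2m}/β^{2m} + F^{m−1}/β^{m−1}) g_{ij} − (m+1)(2m F^{2m+1}/β^{2m+1} + (m−1) F^m/β^m)(b_i F_{y^j} + b_j F_{y^i}) + (m+1)(2m F^{2m}/β^{2m} + (m−1) F^{m−1}/β^{m−1}) F_{y^i} F_{y^j} + (1 + m(2m+1) F^{2m+2}/β^{2m+2} + m(m−1) F^{m+1}/β^{m+1}) b_i b_j. -/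
open scoped BigOperators

/-- Partial derivative in the fiber variable `y^i`. -/
noncomputable def d1 {n : ℕ} (f : (Fin n → ℝ) → ℝ) (i : Fin n) (y : Fin n → ℝ) : ℝ :=
  fderiv ℝ f y (Pi.single i 1)

/-- Second partial derivative in the fiber variables `y^i`, `y^j`. -/
noncomputable def d2 {n : ℕ} (f : (Fin n → ℝ) → ℝ) (i j : Fin n) (y : Fin n → ℝ) : ℝ :=
  d1 (d1 f i) j y

/-- The 1-form `β(y) = b_i y^i`. -/
noncomputable def lform {n : ℕ} (b : Fin n → ℝ) (y : Fin n → ℝ) : ℝ := ∑ i, b i * y i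

noncomputable def Lb {n : ℕ} (b : Fin n → ℝ) : (Fin n → ℝ) →L[ℝ] ℝ :=
  ∑ i, b i • ContinuousLinearMap.proj i

lemma lform_eq {n : ℕ} (b : Fin n → ℝ) : lform b = ⇑(Lb b) := by
  funext y
  simp [lform, Lb, ContinuousLinearMap.sum_apply, ContinuousLinearMap.smul_apply,
    ContinuousLinearMap.proj_apply, smul_eq_mul]

lemma lform_hasFDerivAt {n : ℕ} (b : Fin n → ℝ) (y : Fin n → ℝ) :
    HasFDerivAt (lform b) (Lb b) y := by
  rw [lform_eq]; exact (Lb b).hasFDerivAt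

lemma Lb_single {n : ℕ} (b : Fin n → ℝ) (j : Fin n) : Lb b (Pi.single j 1) = b j := by
  simp [Lb, ContinuousLinearMap.sum_apply, ContinuousLinearMap.smul_apply,
    ContinuousLinearMap.proj_apply, smul_eq_mul, Pi.single_apply]

lemma d1_congr {n : ℕ} {f g : (Fin n → ℝ) → ℝ} {y : Fin n → ℝ} (h : f =ᶠ[nhds y] g)
    (i : Fin n) : d1 f i y = d1 g i y := by
  unfold d1; rw [h.fderiv_eq]

/-- Fundamental tensor of the generalized Kropina–Randers change
`F̄ = F^{m+1}/β^m + β`, `m ≠ 0, −1`. -/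
theorem genKropinaRanders_fundamental_tensor {n : ℕ} (F : (Fin n → ℝ) → ℝ) (b : Fin n → ℝ)
    (m : ℝ) (hm0 : m ≠ 0) (hm1 : m ≠ -1)
    (hF : ContDiff ℝ (⊤ : ℕ∞) F) (hFpos : ∀ y, 0 < F y) (y0 : Fin n → ℝ)
    (hβ : 0 < lform b y0) :
    ∀ i j : Fin n,
      (fun y => (F y) ^ (m + 1 : ℝ) / (lform b y) ^ (m : ℝ) + lform b y) y0 *
          d2 (fun y => (F y) ^ (m + 1 : ℝ) / (lform b y) ^ (m : ℝ) + lform b y) i j y0 +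
        d1 (fun y => (F y) ^ (m + 1 : ℝ) / (lform b y) ^ (m : ℝ) + lform b y) i y0 *
          d1 (fun y => (F y) ^ (m + 1 : ℝ) / (lform b y) ^ (m : ℝ) + lform b y) j y0 =
      (m + 1) * ((F y0) ^ (2 * m) / (lform b y0) ^ (2 * m)
            + (F y0) ^ (m - 1) / (lform b y0) ^ (m - 1)) *
          (F y0 * d2 F i j y0 + d1 F i y0 * d1 F j y0)
        - (m + 1) * (2 * m * (F y0) ^ (2 * m + 1) / (lform b y0) ^ (2 * m + 1)
            + (m - 1) * (F y0) ^ (m : ℝ) / (lform b y0) ^ (m : ℝ)) *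
          (b i * d1 F j y0 + b j * d1 F i y0)
        + (m + 1) * (2 * m * (F y0) ^ (2 * m) / (lform b y0) ^ (2 * m)
            + (m - 1) * (F y0) ^ (m - 1) / (lform b y0) ^ (m - 1)) *
          (d1 F i y0 * d1 F j y0)
        + (1 + m * (2 * m + 1) * (F y0) ^ (2 * m + 2) / (lform b y0) ^ (2 * m + 2)
            + m * (m - 1) * (F y0) ^ (m + 1) / (lform b y0) ^ (m + 1)) *
          (b i * b j) := by
  intro i j
  have hFdiff : ∀ y, HasFDerivAt F (fderiv ℝ F y) y :=
    fun y => ((hF.differentiable (by simp)) y).hasFDerivAt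
  have hd1F : ∀ k : Fin n, ContDiff ℝ (⊤ : ℕ∞) (d1 F k) := by
    intro k
    have h := ((ContinuousLinearMap.apply ℝ ℝ (Pi.single k (1:ℝ)) :
        ((Fin n → ℝ) →L[ℝ] ℝ) →L[ℝ] ℝ)).contDiff.comp
      (hF.fderiv_right (m := ((⊤ : ℕ∞) : WithTop ℕ∞)) (by exact_mod_cast le_top))
    exact h
  have hA : 0 < F y0 := hFpos y0
  have hB : 0 < lform b y0 := hβ
  set U : Set (Fin n → ℝ) := {y | 0 < lform b y} with hUdef
  have hUopen : IsOpen U := isOpen_lt continuous_const (by rw [lform_eq]; exact (Lb b).continuous)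
  have hy0 : y0 ∈ U := hβ
  set ψ : (Fin n → ℝ) → ℝ :=
    fun y => F y ^ (m + 1 : ℝ) * (lform b y) ^ (-m : ℝ) + lform b y with hψdef
  have hφψ : Set.EqOn (fun y => (F y) ^ (m + 1 : ℝ) / (lform b y) ^ (m : ℝ) + lform b y) ψ U := by
    intro y hy
    have hy' : (0:ℝ) < lform b y := hy
    simp only [hψdef, Real.rpow_neg hy'.le, div_eq_mul_inv]
  have hψd : ∀ y ∈ U, HasFDerivAt ψ
      ((F y ^ (m + 1 : ℝ)) • (((-m) * (lform b y) ^ (-m - 1 : ℝ)) • Lb b)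
        + ((lform b y) ^ (-m : ℝ)) • (((m + 1) * F y ^ (m : ℝ)) • fderiv ℝ F y) + Lb b) y := by
    intro y hy
    have hy' : (0:ℝ) < lform b y := hy
    have h1 : HasDerivAt (fun x : ℝ => x ^ (m + 1 : ℝ)) ((m + 1) * F y ^ (m : ℝ)) (F y) := by
      have h := Real.hasDerivAt_rpow_const (x := F y) (p := m + 1) (Or.inl (hFpos y).ne')
      simpa using h
    have h2 : HasFDerivAt (fun z => F z ^ (m + 1 : ℝ))
        (((m + 1) * F y ^ (m : ℝ)) • fderiv ℝ F y) y :=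
      h1.comp_hasFDerivAt y (hFdiff y)
    have h3 : HasDerivAt (fun x : ℝ => x ^ (-m : ℝ)) ((-m) * (lform b y) ^ (-m - 1 : ℝ))
        (lform b y) := Real.hasDerivAt_rpow_const (Or.inl hy'.ne')
    have h4 : HasFDerivAt (fun z => (lform b z) ^ (-m : ℝ))
        (((-m) * (lform b y) ^ (-m - 1 : ℝ)) • Lb b) y :=
      h3.comp_hasFDerivAt y (lform_hasFDerivAt b y)
    exact (h2.mul h4).add (lform_hasFDerivAt b y)
  have hd1ψ : ∀ y ∈ U, ∀ k, d1 ψ k y =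
      (m + 1) * F y ^ (m : ℝ) * (lform b y) ^ (-m : ℝ) * d1 F k y
        + (-m) * F y ^ (m + 1 : ℝ) * (lform b y) ^ (-m - 1 : ℝ) * b k + b k := by
    intro y hy k
    unfold d1
    rw [(hψd y hy).fderiv]
    simp only [ContinuousLinearMap.add_apply, ContinuousLinearMap.smul_apply, smul_eq_mul,
      Lb_single]
    ring
  have hd1φ : ∀ y ∈ U, ∀ k,
      d1 (fun y => (F y) ^ (m + 1 : ℝ) / (lform b y) ^ (m : ℝ) + lform b y) k y =
      (m + 1) * F y ^ (m : ℝ) * (lform b y) ^ (-m : ℝ) * d1 F k y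
        + (-m) * F y ^ (m + 1 : ℝ) * (lform b y) ^ (-m - 1 : ℝ) * b k + b k := by
    intro y hy k
    have hev : (fun y => (F y) ^ (m + 1 : ℝ) / (lform b y) ^ (m : ℝ) + lform b y) =ᶠ[nhds y] ψ :=
      Filter.eventuallyEq_of_mem (hUopen.mem_nhds hy) hφψ
    rw [d1_congr hev k, hd1ψ y hy k]
  -- second derivative
  have hGd : HasFDerivAt (d1 F i) (fderiv ℝ (d1 F i) y0) y0 :=
    (((hd1F i).differentiable (by simp)) y0).hasFDerivAt
  have h2m : HasFDerivAt (fun z => F z ^ (m : ℝ)) ((m * F y0 ^ (m - 1 : ℝ)) • fderiv ℝ F y0) y0 :=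
    (Real.hasDerivAt_rpow_const (Or.inl hA.ne')).comp_hasFDerivAt y0 (hFdiff y0)
  have h1' : HasDerivAt (fun x : ℝ => x ^ (m + 1 : ℝ)) ((m + 1) * F y0 ^ (m : ℝ)) (F y0) := by
    have h := Real.hasDerivAt_rpow_const (x := F y0) (p := m + 1) (Or.inl hA.ne')
    simpa using h
  have h2m1 : HasFDerivAt (fun z => F z ^ (m + 1 : ℝ))
      (((m + 1) * F y0 ^ (m : ℝ)) • fderiv ℝ F y0) y0 :=
    h1'.comp_hasFDerivAt y0 (hFdiff y0)
  have h4m : HasFDerivAt (fun z => (lform b z) ^ (-m : ℝ))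
      (((-m) * (lform b y0) ^ (-m - 1 : ℝ)) • Lb b) y0 :=
    (Real.hasDerivAt_rpow_const (Or.inl hB.ne')).comp_hasFDerivAt y0 (lform_hasFDerivAt b y0)
  have h4m1 : HasFDerivAt (fun z => (lform b z) ^ (-m - 1 : ℝ))
      (((-m - 1) * (lform b y0) ^ (-m - 1 - 1 : ℝ)) • Lb b) y0 :=
    (Real.hasDerivAt_rpow_const (Or.inl hB.ne')).comp_hasFDerivAt y0 (lform_hasFDerivAt b y0)
  have total := ((((h2m.const_mul (m + 1)).mul h4m).mul hGd).add
      (((h2m1.const_mul (-m)).mul h4m1).mul_const (b i))).add_const (b i)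
  have hev2 : d1 (fun y => (F y) ^ (m + 1 : ℝ) / (lform b y) ^ (m : ℝ) + lform b y) i =ᶠ[nhds y0]
      (fun y => (m + 1) * F y ^ (m : ℝ) * (lform b y) ^ (-m : ℝ) * d1 F i y
        + (-m) * F y ^ (m + 1 : ℝ) * (lform b y) ^ (-m - 1 : ℝ) * b i + b i) :=
    Filter.eventuallyEq_of_mem (hUopen.mem_nhds hy0) (fun y hy => hd1φ y hy i)
  have hFj : fderiv ℝ F y0 (Pi.single j 1) = d1 F j y0 := rfl
  have hFij : fderiv ℝ (d1 F i) y0 (Pi.single j 1) = d2 F i j y0 := rfl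
  have hd2 : d2 (fun y => (F y) ^ (m + 1 : ℝ) / (lform b y) ^ (m : ℝ) + lform b y) i j y0 =
      (m + 1) * F y0 ^ (m : ℝ) * (lform b y0) ^ (-m : ℝ) * d2 F i j y0
        + (m + 1) * (m * F y0 ^ (m - 1 : ℝ)) * (lform b y0) ^ (-m : ℝ)
            * (d1 F i y0 * d1 F j y0)
        + (-m) * (m + 1) * F y0 ^ (m : ℝ) * (lform b y0) ^ (-m - 1 : ℝ)
            * (b j * d1 F i y0 + b i * d1 F j y0)
        + (-m) * (-m - 1) * F y0 ^ (m + 1 : ℝ) * (lform b y0) ^ (-m - 1 - 1 : ℝ)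
            * (b i * b j) := by
    have h0 : d2 (fun y => (F y) ^ (m + 1 : ℝ) / (lform b y) ^ (m : ℝ) + lform b y) i j y0 =
        fderiv ℝ (d1 (fun y => (F y) ^ (m + 1 : ℝ) / (lform b y) ^ (m : ℝ) + lform b y) i) y0
          (Pi.single j 1) := rfl
    rw [h0, hev2.fderiv_eq, HasFDerivAt.fderiv (f := fun y => (m + 1) * F y ^ (m : ℝ) * (lform b y) ^ (-m : ℝ) * d1 F i y
          + (-m) * F y ^ (m + 1 : ℝ) * (lform b y) ^ (-m - 1 : ℝ) * b i + b i) total]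
    simp only [ContinuousLinearMap.add_apply, ContinuousLinearMap.smul_apply, smul_eq_mul,
      Lb_single, hFj, hFij, Pi.mul_apply]
    ring
  have hbeta : (fun y => (F y) ^ (m + 1 : ℝ) / (lform b y) ^ (m : ℝ) + lform b y) y0 =
      F y0 ^ (m + 1 : ℝ) * (lform b y0) ^ (-m : ℝ) + lform b y0 := hφψ hy0
  rw [hbeta, hd2, hd1φ y0 hy0 i, hd1φ y0 hy0 j]
  -- now pure rpow algebra
  have e1 : F y0 ^ (m + 1 : ℝ) = F y0 ^ (m : ℝ) * F y0 := by
    rw [Real.rpow_add hA, Real.rpow_one]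
  have e2 : F y0 ^ (m - 1 : ℝ) = F y0 ^ (m : ℝ) * (F y0)⁻¹ := by
    rw [show (m - 1 : ℝ) = m + (-1) by ring, Real.rpow_add hA, Real.rpow_neg_one]
  have e3 : F y0 ^ (2 * m : ℝ) = F y0 ^ (m : ℝ) * F y0 ^ (m : ℝ) := by
    rw [two_mul, Real.rpow_add hA]
  have e4 : F y0 ^ (2 * m + 1 : ℝ) = F y0 ^ (m : ℝ) * F y0 ^ (m : ℝ) * F y0 := by
    rw [show (2 * m + 1 : ℝ) = m + m + 1 by ring, Real.rpow_add hA, Real.rpow_add hA,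
      Real.rpow_one]
  have e5 : F y0 ^ (2 * m + 2 : ℝ) = F y0 ^ (m : ℝ) * F y0 ^ (m : ℝ) * F y0 * F y0 := by
    rw [show (2 * m + 2 : ℝ) = m + m + 1 + 1 by ring, Real.rpow_add hA, Real.rpow_add hA,
      Real.rpow_add hA, Real.rpow_one]
  have f1 : (lform b y0) ^ (-m : ℝ) = ((lform b y0) ^ (m : ℝ))⁻¹ := by
    rw [Real.rpow_neg hB.le]
  have f2 : (lform b y0) ^ (-m - 1 : ℝ) = ((lform b y0) ^ (m : ℝ) * lform b y0)⁻¹ := by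
    rw [show (-m - 1 : ℝ) = -(m + 1) by ring, Real.rpow_neg hB.le, Real.rpow_add hB,
      Real.rpow_one]
  have f3 : (lform b y0) ^ (-m - 1 - 1 : ℝ) =
      ((lform b y0) ^ (m : ℝ) * lform b y0 * lform b y0)⁻¹ := by
    rw [show (-m - 1 - 1 : ℝ) = -(m + 1 + 1) by ring, Real.rpow_neg hB.le, Real.rpow_add hB,
      Real.rpow_add hB, Real.rpow_one]
  have f4 : (lform b y0) ^ (2 * m : ℝ) = (lform b y0) ^ (m : ℝ) * (lform b y0) ^ (m : ℝ) := by
    rw [two_mul, Real.rpow_add hB]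
  have f5 : (lform b y0) ^ (2 * m + 1 : ℝ) =
      (lform b y0) ^ (m : ℝ) * (lform b y0) ^ (m : ℝ) * lform b y0 := by
    rw [show (2 * m + 1 : ℝ) = m + m + 1 by ring, Real.rpow_add hB, Real.rpow_add hB,
      Real.rpow_one]
  have f6 : (lform b y0) ^ (2 * m + 2 : ℝ) =
      (lform b y0) ^ (m : ℝ) * (lform b y0) ^ (m : ℝ) * lform b y0 * lform b y0 := by
    rw [show (2 * m + 2 : ℝ) = m + m + 1 + 1 by ring, Real.rpow_add hB, Real.rpow_add hB,
      Real.rpow_add hB, Real.rpow_one]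
  have f7 : (lform b y0) ^ (m - 1 : ℝ) = (lform b y0) ^ (m : ℝ) * (lform b y0)⁻¹ := by
    rw [show (m - 1 : ℝ) = m + (-1) by ring, Real.rpow_add hB, Real.rpow_neg_one]
  have f8 : (lform b y0) ^ (m + 1 : ℝ) = (lform b y0) ^ (m : ℝ) * lform b y0 := by
    rw [Real.rpow_add hB, Real.rpow_one]
  have hAm : (0:ℝ) < F y0 ^ (m : ℝ) := Real.rpow_pos_of_pos hA m
  have hBm : (0:ℝ) < (lform b y0) ^ (m : ℝ) := Real.rpow_pos_of_pos hB m
  rw [e5, e4, e3, e2, e1, f6, f5, f4, f3, f2, f1, f7, f8]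
  field_simp
  ring
end

section
/- Let F be a Finsler metric with fundamental tensor g_{ij}, β = b_i y^i a 1-form with F − β ≠ 0, and F̄ = F²/(F−β) + β (Matsumoto–Randers change). Then (F−β)⁴ ḡ_{ij} = (F⁴ − 2βF³ − 2β²F² + 5β³F − 2β⁴) g_{ij} + (2F⁴ − 8βF³ + 3β²F²)(b_i F_{y^j} + b_j F_{y^i}) + (−2βF³ + 8β²F² − 3β³F) F_{y^i} F_{y^j} + (6F⁴ − 6βF³ + 6β²F² − 4β³F + β⁴) b_i b_j, where ḡ_{ij} = F̄ F̄_{y^i y^j} + F̄_{y^i} F̄_{y^j}. -/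
open scoped BigOperators

noncomputable def lformL {n : ℕ} (b : Fin n → ℝ) : (Fin n → ℝ) →L[ℝ] ℝ :=
  ∑ i, b i • ContinuousLinearMap.proj i

lemma lformL_apply {n : ℕ} (b : Fin n → ℝ) (v : Fin n → ℝ) :
    lformL b v = ∑ i, b i * v i := by
  simp [lformL, ContinuousLinearMap.sum_apply]

lemma lformL_single {n : ℕ} (b : Fin n → ℝ) (k : Fin n) :
    lformL b (Pi.single k 1) = b k := by
  simp [lformL_apply, Pi.single_apply, mul_ite, Finset.sum_ite_eq']

lemma hasFDerivAt_lform {n : ℕ} (b : Fin n → ℝ) (y : Fin n → ℝ) :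
    HasFDerivAt (lform b) (lformL b) y := by
  have : lform b = fun y => lformL b y := by
    funext y; rw [lformL_apply]; rfl
  rw [this]
  exact (lformL b).hasFDerivAt

lemma hasFDerivAt_inv_comp {n : ℕ} {G : (Fin n → ℝ) → ℝ} {G' : (Fin n → ℝ) →L[ℝ] ℝ}
    {y : Fin n → ℝ} (hG : HasFDerivAt G G' y) (hne : G y ≠ 0) :
    HasFDerivAt (fun y => (G y)⁻¹) ((-(G y ^ 2)⁻¹) • G') y :=
  (hasDerivAt_inv hne).comp_hasFDerivAt y hG

lemma d1_bar {n : ℕ} (F : (Fin n → ℝ) → ℝ) (b : Fin n → ℝ)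
    (hF : ContDiff ℝ (⊤ : ℕ∞) F) (k : Fin n) (y : Fin n → ℝ) (hne : F y - lform b y ≠ 0) :
    d1 (fun y => (F y) ^ 2 / (F y - lform b y) + lform b y) k y =
      ((F y - lform b y) * (2 * F y * d1 F k y) - F y * F y * (d1 F k y - b k)) *
        ((F y - lform b y) * (F y - lform b y))⁻¹ + b k := by
  have hFy : HasFDerivAt F (fderiv ℝ F y) y := (hF.differentiable (by simp) y).hasFDerivAt
  have hG : HasFDerivAt (fun y => F y - lform b y) (fderiv ℝ F y - lformL b) y :=
    hFy.sub (hasFDerivAt_lform b y)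
  have hinv := hasFDerivAt_inv_comp hG hne
  have hfun : (fun y => (F y) ^ 2 / (F y - lform b y) + lform b y) =
      fun y => (F y * F y) * (fun y => (F y - lform b y)⁻¹) y + lform b y := by
    funext z; rw [div_eq_mul_inv, pow_two]
  have h := ((hFy.mul hFy).mul hinv).add (hasFDerivAt_lform b y)
  rw [show d1 (fun y => (F y) ^ 2 / (F y - lform b y) + lform b y) k y
      = fderiv ℝ (fun y => (F y) ^ 2 / (F y - lform b y) + lform b y) y (Pi.single k 1) from rfl,
    hfun, (show HasFDerivAt (fun y => F y * F y * (fun y => (F y - lform b y)⁻¹) y + lform b y) _ y from h).fderiv]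
  simp only [ContinuousLinearMap.add_apply, ContinuousLinearMap.smul_apply,
    ContinuousLinearMap.sub_apply, smul_eq_mul, lformL_single, Pi.mul_apply]
  have h1 : fderiv ℝ F y (Pi.single k 1) = d1 F k y := rfl
  rw [h1]
  field_simp
  ring

set_option maxHeartbeats 1000000 in
/-- Fundamental tensor of the Matsumoto–Randers change `F̄ = F²/(F−β) + β`. -/

theorem matsumotoRanders_fundamental_tensor {n : ℕ} (F : (Fin n → ℝ) → ℝ) (b : Fin n → ℝ)
    (hF : ContDiff ℝ (⊤ : ℕ∞) F) (hFpos : ∀ y, 0 < F y) (y0 : Fin n → ℝ)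
    (hFβ : F y0 - lform b y0 ≠ 0) :
    ∀ i j : Fin n,
      (F y0 - lform b y0) ^ 4 *
        ((fun y => (F y) ^ 2 / (F y - lform b y) + lform b y) y0 *
            d2 (fun y => (F y) ^ 2 / (F y - lform b y) + lform b y) i j y0 +
          d1 (fun y => (F y) ^ 2 / (F y - lform b y) + lform b y) i y0 *
            d1 (fun y => (F y) ^ 2 / (F y - lform b y) + lform b y) j y0) =
      ((F y0) ^ 4 - 2 * lform b y0 * (F y0) ^ 3 - 2 * (lform b y0) ^ 2 * (F y0) ^ 2
            + 5 * (lform b y0) ^ 3 * F y0 - 2 * (lform b y0) ^ 4) *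
          (F y0 * d2 F i j y0 + d1 F i y0 * d1 F j y0)
        + (2 * (F y0) ^ 4 - 8 * lform b y0 * (F y0) ^ 3
            + 3 * (lform b y0) ^ 2 * (F y0) ^ 2) *
          (b i * d1 F j y0 + b j * d1 F i y0)
        + (-(2 * lform b y0 * (F y0) ^ 3) + 8 * (lform b y0) ^ 2 * (F y0) ^ 2
            - 3 * (lform b y0) ^ 3 * F y0) *
          (d1 F i y0 * d1 F j y0)
        + (6 * (F y0) ^ 4 - 6 * lform b y0 * (F y0) ^ 3 + 6 * (lform b y0) ^ 2 * (F y0) ^ 2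
            - 4 * (lform b y0) ^ 3 * F y0 + (lform b y0) ^ 4) *
          (b i * b j) := by
  intro i j
  have hFy : HasFDerivAt F (fderiv ℝ F y0) y0 := (hF.differentiable (by simp) y0).hasFDerivAt
  have hL := hasFDerivAt_lform b y0
  have hG : HasFDerivAt (fun y => F y - lform b y) (fderiv ℝ F y0 - lformL b) y0 := hFy.sub hL
  have hDiC : ContDiff ℝ (⊤ : ℕ∞) (fun y => d1 F i y) := by
    simp only [d1]
    exact (hF.fderiv_right (by simp)).clm_apply contDiff_const
  have hDi : HasFDerivAt (fun y => d1 F i y) (fderiv ℝ (fun y => d1 F i y) y0) y0 :=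
    (hDiC.differentiable (by simp) y0).hasFDerivAt
  have hlc : Continuous (lform b) := by
    unfold lform
    exact continuous_finset_sum _ (fun k _ => continuous_const.mul (continuous_apply k))
  have hGc : Continuous (fun y => F y - lform b y) := hF.continuous.sub hlc
  have hmem : {y | F y - lform b y ≠ 0} ∈ nhds y0 := by
    have ho : IsOpen {y : Fin n → ℝ | F y - lform b y ≠ 0} :=
      isOpen_compl_singleton.preimage hGc
    exact ho.mem_nhds hFβ
  have hEE : (fun y => d1 (fun y => (F y) ^ 2 / (F y - lform b y) + lform b y) i y) =ᶠ[nhds y0] (fun y => ((F y - lform b y) * (2 * F y * d1 F i y) - F y * F y * (d1 F i y - b i)) * ((F y - lform b y) * (F y - lform b y))⁻¹ + b i) :=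
    Filter.eventually_of_mem hmem (fun y hy => d1_bar F b hF i y hy)
  have hd2eq : d2 (fun y => (F y) ^ 2 / (F y - lform b y) + lform b y) i j y0 = fderiv ℝ (fun y => ((F y - lform b y) * (2 * F y * d1 F i y) - F y * F y * (d1 F i y - b i)) * ((F y - lform b y) * (F y - lform b y))⁻¹ + b i) y0 (Pi.single j 1) := by
    show fderiv ℝ (fun y => d1 (fun y => (F y) ^ 2 / (F y - lform b y) + lform b y) i y) y0 (Pi.single j 1) = _
    rw [hEE.fderiv_eq]
  have hφ : HasFDerivAt (fun y => ((F y - lform b y) * (2 * F y * d1 F i y) - F y * F y * (d1 F i y - b i)) * ((F y - lform b y) * (F y - lform b y))⁻¹ + b i)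
      (((F y0 - lform b y0) * (2 * F y0 * d1 F i y0) - F y0 * F y0 * (d1 F i y0 - b i)) •
          ((-(((F y0 - lform b y0) * (F y0 - lform b y0)) ^ 2)⁻¹) •
            ((F y0 - lform b y0) • (fderiv ℝ F y0 - lformL b)
              + (F y0 - lform b y0) • (fderiv ℝ F y0 - lformL b)))
        + ((F y0 - lform b y0) * (F y0 - lform b y0))⁻¹ •
          (((F y0 - lform b y0) • ((2 * F y0) • fderiv ℝ (fun y => d1 F i y) y0
                + d1 F i y0 • ((2:ℝ) • fderiv ℝ F y0))
              + (2 * F y0 * d1 F i y0) • (fderiv ℝ F y0 - lformL b))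
            - ((F y0 * F y0) • fderiv ℝ (fun y => d1 F i y) y0
              + (d1 F i y0 - b i) • (F y0 • fderiv ℝ F y0 + F y0 • fderiv ℝ F y0)))) y0 :=
    (((hG.mul ((hFy.const_mul 2).mul hDi)).sub
        ((hFy.mul hFy).mul (hDi.sub_const (b i)))).mul
      (hasFDerivAt_inv_comp (hG.mul hG) (mul_ne_zero hFβ hFβ))).add_const (b i)
  have hval : fderiv ℝ (fun y => ((F y - lform b y) * (2 * F y * d1 F i y) - F y * F y * (d1 F i y - b i)) * ((F y - lform b y) * (F y - lform b y))⁻¹ + b i) y0 (Pi.single j 1) =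
      ((F y0 - lform b y0) * (2 * F y0 * d1 F i y0) - F y0 * F y0 * (d1 F i y0 - b i)) *
        ((-(((F y0 - lform b y0) * (F y0 - lform b y0)) ^ 2)⁻¹) *
          ((F y0 - lform b y0) * (d1 F j y0 - b j)
            + (F y0 - lform b y0) * (d1 F j y0 - b j)))
      + ((F y0 - lform b y0) * (F y0 - lform b y0))⁻¹ *
        (((F y0 - lform b y0) * ((2 * F y0) * d2 F i j y0 + d1 F i y0 * (2 * d1 F j y0))
            + (2 * F y0 * d1 F i y0) * (d1 F j y0 - b j))
          - ((F y0 * F y0) * d2 F i j y0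
            + (d1 F i y0 - b i) * (F y0 * d1 F j y0 + F y0 * d1 F j y0))) := by
    rw [hφ.fderiv]
    simp only [ContinuousLinearMap.add_apply, ContinuousLinearMap.sub_apply,
      ContinuousLinearMap.smul_apply, smul_eq_mul, lformL_single]
    rfl
  rw [hd2eq, hval, d1_bar F b hF i y0 hFβ, d1_bar F b hF j y0 hFβ]
  have h2 : ((F y0 - lform b y0) * (F y0 - lform b y0)) ≠ 0 := mul_ne_zero hFβ hFβ
  field_simp
  ring
end

section
/- With A = a_{ij}(x)y^i y^j, β = b_i(x)y^i smooth on an open set with A > 0, β ≠ 0, let F̄ = A/β + β. If the two equations (i) 2β₀β_ℓ + β(β_{x^ℓ} − β_{0ℓ}) = 0 and (ii) β³(β_{0ℓ} − β_{x^ℓ}) + β²(A_{0ℓ} − A_{x^ℓ}) − β(A₀β_ℓ + A_ℓβ₀) = 0 hold for all ℓ, then F̄ satisfies the Hamel equation F̄_{x^k y^ℓ}y^k − F̄_{x^ℓ} = 0 (i.e., F̄ is projectively flat). -/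
open scoped BigOperators

/-- Partial derivative in the base variable `x^k`. -/
noncomputable def pdx {n : ℕ} (f : (Fin n → ℝ) → (Fin n → ℝ) → ℝ) (k : Fin n)
    (x y : Fin n → ℝ) : ℝ := fderiv ℝ (fun x' => f x' y) x (Pi.single k 1)

/-- Partial derivative in the fiber variable `y^l`. -/
noncomputable def pdy {n : ℕ} (f : (Fin n → ℝ) → (Fin n → ℝ) → ℝ) (l : Fin n)
    (x y : Fin n → ℝ) : ℝ := fderiv ℝ (fun y' => f x y') y (Pi.single l 1)

/-- `f_0 = f_{x^k} y^k` (sum over `k`). -/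
noncomputable def der0 {n : ℕ} (f : (Fin n → ℝ) → (Fin n → ℝ) → ℝ)
    (x y : Fin n → ℝ) : ℝ := ∑ k, pdx f k x y * y k

/-- `f_{0l} = f_{x^k y^l} y^k` (sum over `k`). -/
noncomputable def der0l {n : ℕ} (f : (Fin n → ℝ) → (Fin n → ℝ) → ℝ) (l : Fin n)
    (x y : Fin n → ℝ) : ℝ := ∑ k, pdy (pdx f k) l x y * y k

/-- The Riemannian quadratic form `A(x,y) = a_{ij}(x) y^i y^j`. -/
noncomputable def quadA {n : ℕ} (a : (Fin n → ℝ) → Fin n → Fin n → ℝ)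
    (x y : Fin n → ℝ) : ℝ := ∑ i, ∑ j, a x i j * y i * y j

/-- The 1-form `β(x,y) = b_i(x) y^i`. -/
noncomputable def oneform {n : ℕ} (b : (Fin n → ℝ) → Fin n → ℝ)
    (x y : Fin n → ℝ) : ℝ := ∑ i, b x i * y i

noncomputable def linCLM {n : ℕ} (c : Fin n → ℝ) : (Fin n → ℝ) →L[ℝ] ℝ :=
  ∑ i, c i • (ContinuousLinearMap.proj i : (Fin n → ℝ) →L[ℝ] ℝ)

lemma linCLM_single {n : ℕ} (c : Fin n → ℝ) (l : Fin n) :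
    linCLM c (Pi.single l 1) = c l := by
  simp [linCLM, ContinuousLinearMap.sum_apply, Pi.single_apply, Finset.sum_ite_eq']

lemma hasFDerivAt_lin {n : ℕ} (c : Fin n → ℝ) (y : Fin n → ℝ) :
    HasFDerivAt (fun y' : Fin n → ℝ => ∑ i, c i * y' i) (linCLM c) y := by
  apply HasFDerivAt.fun_sum
  intro i _
  exact ((ContinuousLinearMap.proj i : (Fin n → ℝ) →L[ℝ] ℝ).hasFDerivAt).const_mul (c i)

noncomputable def quadCLM {n : ℕ} (c : Fin n → Fin n → ℝ) (y : Fin n → ℝ) :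
    (Fin n → ℝ) →L[ℝ] ℝ :=
  ∑ i, ∑ j, ((c i j * y i) • (ContinuousLinearMap.proj j : (Fin n → ℝ) →L[ℝ] ℝ)
    + y j • (c i j • (ContinuousLinearMap.proj i : (Fin n → ℝ) →L[ℝ] ℝ)))

lemma hasFDerivAt_quad {n : ℕ} (c : Fin n → Fin n → ℝ) (y : Fin n → ℝ) :
    HasFDerivAt (fun y' : Fin n → ℝ => ∑ i, ∑ j, c i j * y' i * y' j) (quadCLM c y) y := by
  apply HasFDerivAt.fun_sum
  intro i _
  apply HasFDerivAt.fun_sum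
  intro j _
  exact (((ContinuousLinearMap.proj i : (Fin n → ℝ) →L[ℝ] ℝ).hasFDerivAt.const_mul
      (c i j)).mul (ContinuousLinearMap.proj j : (Fin n → ℝ) →L[ℝ] ℝ).hasFDerivAt)

lemma quadCLM_single {n : ℕ} (c : Fin n → Fin n → ℝ) (y : Fin n → ℝ) (l : Fin n) :
    quadCLM c y (Pi.single l 1) = (∑ i, c i l * y i) + ∑ j, c l j * y j := by
  simp [quadCLM, ContinuousLinearMap.sum_apply, Pi.single_apply, Finset.sum_add_distrib,
    Finset.sum_ite_eq', mul_comm]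

lemma pdy_oneform {n : ℕ} (b : (Fin n → ℝ) → Fin n → ℝ) (l : Fin n) (x y : Fin n → ℝ) :
    pdy (oneform b) l x y = b x l := by
  unfold pdy oneform
  rw [(hasFDerivAt_lin (b x) y).fderiv, linCLM_single]

lemma pdy_quadA {n : ℕ} (a : (Fin n → ℝ) → Fin n → Fin n → ℝ) (l : Fin n) (x y : Fin n → ℝ) :
    pdy (quadA a) l x y = (∑ i, a x i l * y i) + ∑ j, a x l j * y j := by
  unfold pdy quadA
  rw [(hasFDerivAt_quad (a x) y).fderiv, quadCLM_single]

lemma hasFDerivAt_oneform_x {n : ℕ} (b : (Fin n → ℝ) → Fin n → ℝ)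
    (hb : ∀ i, ContDiff ℝ (⊤ : ℕ∞) (fun x => b x i)) (x0 y : Fin n → ℝ) :
    HasFDerivAt (fun x => oneform b x y)
      (∑ i, y i • fderiv ℝ (fun x => b x i) x0) x0 := by
  apply HasFDerivAt.fun_sum
  intro i _
  exact (((hb i).differentiable (by simp)).differentiableAt.hasFDerivAt).mul_const (y i)

lemma hasFDerivAt_quadA_x {n : ℕ} (a : (Fin n → ℝ) → Fin n → Fin n → ℝ)
    (ha : ∀ i j, ContDiff ℝ (⊤ : ℕ∞) (fun x => a x i j)) (x0 y : Fin n → ℝ) :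
    HasFDerivAt (fun x => quadA a x y)
      (∑ i, ∑ j, y j • (y i • fderiv ℝ (fun x => a x i j) x0)) x0 := by
  apply HasFDerivAt.fun_sum
  intro i _
  apply HasFDerivAt.fun_sum
  intro j _
  exact ((((ha i j).differentiable (by simp)).differentiableAt.hasFDerivAt).mul_const
    (y i)).mul_const (y j)

lemma pdx_oneform_eq {n : ℕ} (b : (Fin n → ℝ) → Fin n → ℝ)
    (hb : ∀ i, ContDiff ℝ (⊤ : ℕ∞) (fun x => b x i)) (k : Fin n) (x0 y : Fin n → ℝ) :
    pdx (oneform b) k x0 y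
      = ∑ i, fderiv ℝ (fun x => b x i) x0 (Pi.single k 1) * y i := by
  unfold pdx
  rw [(hasFDerivAt_oneform_x b hb x0 y).fderiv]
  simp [ContinuousLinearMap.sum_apply, mul_comm]

lemma pdx_quadA_eq {n : ℕ} (a : (Fin n → ℝ) → Fin n → Fin n → ℝ)
    (ha : ∀ i j, ContDiff ℝ (⊤ : ℕ∞) (fun x => a x i j)) (k : Fin n) (x0 y : Fin n → ℝ) :
    pdx (quadA a) k x0 y
      = ∑ i, ∑ j, fderiv ℝ (fun x => a x i j) x0 (Pi.single k 1) * y i * y j := by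
  unfold pdx
  rw [(hasFDerivAt_quadA_x a ha x0 y).fderiv]
  simp only [ContinuousLinearMap.sum_apply, ContinuousLinearMap.smul_apply, smul_eq_mul]
  apply Finset.sum_congr rfl; intro i _
  apply Finset.sum_congr rfl; intro j _
  ring

lemma hasFDerivAt_invcomp {E : Type*} [NormedAddCommGroup E] [NormedSpace ℝ E]
    {g : E → ℝ} {g' : E →L[ℝ] ℝ} {x : E} (hg : HasFDerivAt g g' x) (hx : g x ≠ 0) :
    HasFDerivAt (fun t => (g t)⁻¹) (-(g x)⁻¹ ^ 2 • g') x := by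
  have h := HasFDerivAt.comp (𝕜 := ℝ) x (hasFDerivAt_inv hx) hg
  refine h.congr_fderiv ?_
  ext v
  simp
  ring

/-- Projective flatness of the Kropina–Randers change `F̄ = A/β + β`:
if the two conditions hold then the Hamel equation `F̄_{x^k y^l} y^k − F̄_{x^l} = 0` holds. -/
theorem kropinaRanders_projectively_flat {n : ℕ}
    (a : (Fin n → ℝ) → Fin n → Fin n → ℝ) (b : (Fin n → ℝ) → Fin n → ℝ)
    (ha : ∀ i j, ContDiff ℝ (⊤ : ℕ∞) (fun x => a x i j)) (hsym : ∀ x i j, a x i j = a x j i)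
    (hb : ∀ i, ContDiff ℝ (⊤ : ℕ∞) (fun x => b x i))
    (x0 y0 : Fin n → ℝ) (hA : 0 < quadA a x0 y0) (hβ : oneform b x0 y0 ≠ 0)
    (h1 : ∀ l : Fin n,
      2 * der0 (oneform b) x0 y0 * b x0 l
        + oneform b x0 y0 * (pdx (oneform b) l x0 y0 - der0l (oneform b) l x0 y0) = 0)
    (h2 : ∀ l : Fin n,
      (oneform b x0 y0) ^ 3 * (der0l (oneform b) l x0 y0 - pdx (oneform b) l x0 y0)
        + (oneform b x0 y0) ^ 2 * (der0l (quadA a) l x0 y0 - pdx (quadA a) l x0 y0)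
        - oneform b x0 y0 *
            (der0 (quadA a) x0 y0 * b x0 l
              + pdy (quadA a) l x0 y0 * der0 (oneform b) x0 y0) = 0) :
    ∀ l : Fin n,
      der0l (fun x y => quadA a x y / oneform b x y + oneform b x y) l x0 y0
        - pdx (fun x y => quadA a x y / oneform b x y + oneform b x y) l x0 y0 = 0 := by
  have hFx : ∀ (k : Fin n) (y : Fin n → ℝ), oneform b x0 y ≠ 0 →
      pdx (fun x y => quadA a x y / oneform b x y + oneform b x y) k x0 y
        = (oneform b x0 y *
              (∑ i, ∑ j, fderiv ℝ (fun x => a x i j) x0 (Pi.single k 1) * y i * y j)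
            - quadA a x0 y *
              (∑ i, fderiv ℝ (fun x => b x i) x0 (Pi.single k 1) * y i))
            / (oneform b x0 y)^2
          + (∑ i, fderiv ℝ (fun x => b x i) x0 (Pi.single k 1) * y i) := by
    intro k y hy
    have hAx := hasFDerivAt_quadA_x a ha x0 y
    have hBx := hasFDerivAt_oneform_x b hb x0 y
    have hinv := hasFDerivAt_invcomp hBx hy
    have hq := (hAx.fun_mul hinv).fun_add hBx
    unfold pdx
    simp only [div_eq_mul_inv]
    rw [hq.fderiv]
    simp only [ContinuousLinearMap.add_apply, ContinuousLinearMap.smul_apply,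
      ContinuousLinearMap.sub_apply, ContinuousLinearMap.sum_apply, smul_eq_mul,
      ContinuousLinearMap.neg_apply]
    have e1 : (∑ i, ∑ j, y j * (y i * (fderiv ℝ (fun x => a x i j) x0) (Pi.single k 1)))
        = ∑ i, ∑ j, fderiv ℝ (fun x => a x i j) x0 (Pi.single k 1) * y i * y j := by
      apply Finset.sum_congr rfl; intro i _
      apply Finset.sum_congr rfl; intro j _; ring
    have e2 : (∑ i, y i * (fderiv ℝ (fun x => b x i) x0) (Pi.single k 1))
        = ∑ i, fderiv ℝ (fun x => b x i) x0 (Pi.single k 1) * y i := by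
      apply Finset.sum_congr rfl; intro i _; ring
    rw [e1, e2]
    field_simp
    ring
  have hPk : ∀ k : Fin n, ∀ l : Fin n, pdy (pdx (quadA a) k) l x0 y0
      = (∑ i, fderiv ℝ (fun x => a x i l) x0 (Pi.single k 1) * y0 i)
        + ∑ j, fderiv ℝ (fun x => a x l j) x0 (Pi.single k 1) * y0 j := by
    intro k l
    unfold pdy
    have hfun : (fun y' => pdx (quadA a) k x0 y')
        = fun y' => ∑ i, ∑ j, fderiv ℝ (fun x => a x i j) x0 (Pi.single k 1) * y' i * y' j :=
      funext (pdx_quadA_eq a ha k x0)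
    rw [hfun, (hasFDerivAt_quad _ y0).fderiv, quadCLM_single]
  have hQk : ∀ k : Fin n, ∀ l : Fin n, pdy (pdx (oneform b) k) l x0 y0
      = fderiv ℝ (fun x => b x l) x0 (Pi.single k 1) := by
    intro k l
    unfold pdy
    have hfun : (fun y' => pdx (oneform b) k x0 y')
        = fun y' => ∑ i, fderiv ℝ (fun x => b x i) x0 (Pi.single k 1) * y' i :=
      funext (pdx_oneform_eq b hb k x0)
    rw [hfun, (hasFDerivAt_lin _ y0).fderiv, linCLM_single]
  have hcont : Continuous (fun y => oneform b x0 y) := by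
    unfold oneform
    exact continuous_finset_sum _ fun i _ => continuous_const.mul (continuous_apply i)
  have hmem : {y : Fin n → ℝ | oneform b x0 y ≠ 0} ∈ nhds y0 :=
    (hcont.isOpen_preimage _ isOpen_compl_singleton).mem_nhds hβ
  have key : ∀ k : Fin n, ∀ l : Fin n,
      pdy (pdx (fun x y => quadA a x y / oneform b x y + oneform b x y) k) l x0 y0
        = (1/oneform b x0 y0) * pdy (pdx (quadA a) k) l x0 y0
          + (1 - quadA a x0 y0/(oneform b x0 y0)^2) * pdy (pdx (oneform b) k) l x0 y0
          - (b x0 l/(oneform b x0 y0)^2) * pdx (quadA a) k x0 y0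
          + ((2*quadA a x0 y0*(b x0 l) - pdy (quadA a) l x0 y0 * oneform b x0 y0)
              /(oneform b x0 y0)^3) * pdx (oneform b) k x0 y0 := by
    intro k l
    have heq : (fun y' => pdx (fun x y => quadA a x y / oneform b x y + oneform b x y) k x0 y')
        =ᶠ[nhds y0] (fun y =>
          (oneform b x0 y *
              (∑ i, ∑ j, fderiv ℝ (fun x => a x i j) x0 (Pi.single k 1) * y i * y j)
            - quadA a x0 y *
              (∑ i, fderiv ℝ (fun x => b x i) x0 (Pi.single k 1) * y i))
            / (oneform b x0 y)^2
          + (∑ i, fderiv ℝ (fun x => b x i) x0 (Pi.single k 1) * y i)) := by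
      filter_upwards [hmem] with y hy
      exact hFx k y hy
    have hB : HasFDerivAt (fun y => oneform b x0 y) (linCLM (b x0)) y0 :=
      hasFDerivAt_lin (b x0) y0
    have hA : HasFDerivAt (fun y => quadA a x0 y) (quadCLM (a x0) y0) y0 :=
      hasFDerivAt_quad (a x0) y0
    have hAk : HasFDerivAt
        (fun y => ∑ i, ∑ j, fderiv ℝ (fun x => a x i j) x0 (Pi.single k 1) * y i * y j)
        (quadCLM (fun i j => fderiv ℝ (fun x => a x i j) x0 (Pi.single k 1)) y0) y0 :=
      hasFDerivAt_quad _ y0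
    have hBk : HasFDerivAt
        (fun y => ∑ i, fderiv ℝ (fun x => b x i) x0 (Pi.single k 1) * y i)
        (linCLM (fun i => fderiv ℝ (fun x => b x i) x0 (Pi.single k 1))) y0 :=
      hasFDerivAt_lin _ y0
    have hinv := hasFDerivAt_invcomp (hB.fun_mul hB) (mul_ne_zero hβ hβ)
    have hG := (((hB.fun_mul hAk).fun_sub (hA.fun_mul hBk)).fun_mul hinv).fun_add hBk
    rw [hPk k l, hQk k l, pdx_quadA_eq a ha k x0 y0, pdx_oneform_eq b hb k x0 y0,
      pdy_quadA a l x0 y0]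
    unfold pdy
    rw [heq.fderiv_eq]
    simp only [pow_two, div_eq_mul_inv]
    rw [hG.fderiv]
    simp only [ContinuousLinearMap.add_apply, ContinuousLinearMap.smul_apply,
      ContinuousLinearMap.sub_apply, smul_eq_mul, ContinuousLinearMap.neg_apply,
      linCLM_single, quadCLM_single]
    field_simp
    ring
  intro l
  have hsum : der0l (fun x y => quadA a x y / oneform b x y + oneform b x y) l x0 y0
      = (1/oneform b x0 y0) * der0l (quadA a) l x0 y0
        + (1 - quadA a x0 y0/(oneform b x0 y0)^2) * der0l (oneform b) l x0 y0
        - (b x0 l/(oneform b x0 y0)^2) * der0 (quadA a) x0 y0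
        + ((2*quadA a x0 y0*(b x0 l) - pdy (quadA a) l x0 y0 * oneform b x0 y0)
            /(oneform b x0 y0)^3) * der0 (oneform b) x0 y0 := by
    unfold der0l der0
    have hterm : ∀ k : Fin n,
        pdy (pdx (fun x y => quadA a x y / oneform b x y + oneform b x y) k) l x0 y0 * y0 k
          = (1/oneform b x0 y0) * (pdy (pdx (quadA a) k) l x0 y0 * y0 k)
            + (1 - quadA a x0 y0/(oneform b x0 y0)^2)
                * (pdy (pdx (oneform b) k) l x0 y0 * y0 k)
            - (b x0 l/(oneform b x0 y0)^2) * (pdx (quadA a) k x0 y0 * y0 k)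
            + ((2*quadA a x0 y0*(b x0 l) - pdy (quadA a) l x0 y0 * oneform b x0 y0)
                /(oneform b x0 y0)^3) * (pdx (oneform b) k x0 y0 * y0 k) := by
      intro k; rw [key k l]; ring
    simp only [hterm]
    rw [Finset.sum_add_distrib, Finset.sum_sub_distrib, Finset.sum_add_distrib,
      ← Finset.mul_sum, ← Finset.mul_sum, ← Finset.mul_sum, ← Finset.mul_sum]
  have hpdxF : pdx (fun x y => quadA a x y / oneform b x y + oneform b x y) l x0 y0
      = (oneform b x0 y0 * pdx (quadA a) l x0 y0
          - quadA a x0 y0 * pdx (oneform b) l x0 y0)/(oneform b x0 y0)^2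
        + pdx (oneform b) l x0 y0 := by
    rw [hFx l y0 hβ, ← pdx_quadA_eq a ha l x0 y0, ← pdx_oneform_eq b hb l x0 y0]
  rw [hsum, hpdxF]
  have h1l := h1 l
  have h2l := h2 l
  field_simp
  linear_combination (h2l + quadA a x0 y0 * h1l)
end

section
/- With A = a_{ij}(x)y^i y^j, β = b_i(x)y^i smooth, A > 0, √A − β ≠ 0, let F̄ = A/(√A − β) + β (Matsumoto–Randers change). If A₀A_ℓ = 0, A_{0ℓ} = A_{x^ℓ}, β₀β_ℓ = 0, β_{0ℓ} = β_{x^ℓ}, and A_ℓβ₀ + A₀β_ℓ = 0 for all ℓ, then F̄ satisfies Hamel's equation F̄_{x^k y^ℓ}y^k − F̄_{x^ℓ} = 0, i.e. F̄ is projectively flat. -/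
open scoped BigOperators

open scoped BigOperators

noncomputable def qf {n : ℕ} (c : Fin n → Fin n → ℝ) (y : Fin n → ℝ) : ℝ :=
  ∑ i, ∑ j, c i j * y i * y j

noncomputable def lf {n : ℕ} (c : Fin n → ℝ) (y : Fin n → ℝ) : ℝ :=
  ∑ i, c i * y i

noncomputable def phiF (p q u v : ℝ) : ℝ :=
  (u * (Real.sqrt p - q) - p * (u / (2 * Real.sqrt p) - v)) / (Real.sqrt p - q) ^ 2 + v

lemma qf_differentiable {n : ℕ} (c : Fin n → Fin n → ℝ) : Differentiable ℝ (qf c) := by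
  have hp : ∀ i : Fin n, Differentiable ℝ (fun y : Fin n → ℝ => y i) := fun i =>
    (ContinuousLinearMap.proj (R := ℝ) (φ := fun _ : Fin n => ℝ) i).differentiable
  exact Differentiable.fun_sum fun i _ => Differentiable.fun_sum fun j _ =>
    (((hp i).const_mul (c i j)).mul (hp j))

lemma lf_differentiable {n : ℕ} (c : Fin n → ℝ) : Differentiable ℝ (lf c) := by
  have hp : ∀ i : Fin n, Differentiable ℝ (fun y : Fin n → ℝ => y i) := fun i =>
    (ContinuousLinearMap.proj (R := ℝ) (φ := fun _ : Fin n => ℝ) i).differentiable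
  exact Differentiable.fun_sum fun i _ => ((hp i).const_mul (c i))

lemma hasDerivAt_comp_line {n : ℕ} {g : (Fin n → ℝ) → ℝ} {x : Fin n → ℝ} (e : Fin n → ℝ)
    (hg : DifferentiableAt ℝ g x) :
    HasDerivAt (fun t : ℝ => g (x + t • e)) (fderiv ℝ g x e) 0 := by
  have hline : HasDerivAt (fun t : ℝ => x + t • e) e 0 := by
    simpa using ((hasDerivAt_id (0 : ℝ)).smul_const e).const_add x
  have h0 : x = x + (0 : ℝ) • e := by simp
  exact HasFDerivAt.comp_hasDerivAt_of_eq (0:ℝ) hg.hasFDerivAt hline h0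

lemma hasDerivAt_affine {n : ℕ} (y e : Fin n → ℝ) (i : Fin n) :
    HasDerivAt (fun t : ℝ => y i + t * e i) (e i) 0 := by
  simpa using ((hasDerivAt_id (0 : ℝ)).mul_const (e i)).const_add (y i)

lemma qf_line {n : ℕ} (c : Fin n → Fin n → ℝ) (y : Fin n → ℝ) (l : Fin n) :
    HasDerivAt (fun t : ℝ => qf c (y + t • (Pi.single l 1 : Fin n → ℝ)))
      ((∑ j, c l j * y j) + (∑ i, c i l * y i)) 0 := by
  have key : HasDerivAt
      (fun t : ℝ => ∑ i, ∑ j, c i j * (y i + t * (Pi.single l 1 : Fin n → ℝ) i)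
        * (y j + t * (Pi.single l 1 : Fin n → ℝ) j))
      (∑ i, ∑ j, (c i j * (Pi.single l 1 : Fin n → ℝ) i * y j
        + c i j * y i * (Pi.single l 1 : Fin n → ℝ) j)) 0 := by
    apply HasDerivAt.fun_sum; intro i _; apply HasDerivAt.fun_sum; intro j _
    have h1 := hasDerivAt_affine y (Pi.single l 1) i
    have h2 := hasDerivAt_affine y (Pi.single l 1) j
    have h3 := (h1.const_mul (c i j)).mul h2
    exact h3.congr_deriv (by simp)
  have hfun : (fun t : ℝ => qf c (y + t • (Pi.single l 1 : Fin n → ℝ))) =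
      (fun t : ℝ => ∑ i, ∑ j, c i j * (y i + t * (Pi.single l 1 : Fin n → ℝ) i)
        * (y j + t * (Pi.single l 1 : Fin n → ℝ) j)) := by
    funext t
    simp [qf]
  rw [hfun]
  convert key using 1
  simp [Pi.single_apply, mul_ite, ite_mul, Finset.sum_add_distrib, Finset.sum_ite_eq]

lemma lf_line {n : ℕ} (c : Fin n → ℝ) (y : Fin n → ℝ) (l : Fin n) :
    HasDerivAt (fun t : ℝ => lf c (y + t • (Pi.single l 1 : Fin n → ℝ))) (c l) 0 := by
  have key : HasDerivAt
      (fun t : ℝ => ∑ i, c i * (y i + t * (Pi.single l 1 : Fin n → ℝ) i))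
      (∑ i, c i * (Pi.single l 1 : Fin n → ℝ) i) 0 := by
    apply HasDerivAt.fun_sum; intro i _
    exact (hasDerivAt_affine y (Pi.single l 1) i).const_mul (c i)
  have hfun : (fun t : ℝ => lf c (y + t • (Pi.single l 1 : Fin n → ℝ))) =
      (fun t : ℝ => ∑ i, c i * (y i + t * (Pi.single l 1 : Fin n → ℝ) i)) := by
    funext t; simp [lf]
  rw [hfun]
  convert key using 1
  simp [Pi.single_apply, mul_ite, Finset.sum_ite_eq]
noncomputable def phiD (p q u v p' q' u' v' : ℝ) : ℝ :=
  ((u' * (Real.sqrt p - q) + u * (p' / (2 * Real.sqrt p) - q') -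
      (p' * (u / (2 * Real.sqrt p) - v) +
        p * ((u' * (2 * Real.sqrt p) - u * (2 * (p' / (2 * Real.sqrt p)))) / (2 * Real.sqrt p) ^ 2 - v'))) *
      (Real.sqrt p - q) ^ 2 -
    (u * (Real.sqrt p - q) - p * (u / (2 * Real.sqrt p) - v)) *
      (2 * (Real.sqrt p - q) ^ 1 * (p' / (2 * Real.sqrt p) - q'))) /
    ((Real.sqrt p - q) ^ 2) ^ 2 + v'

lemma phiF_hasDerivAt {p q u v : ℝ → ℝ} {p' q' u' v' : ℝ}
    (hp : HasDerivAt p p' 0) (hq : HasDerivAt q q' 0)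
    (hu : HasDerivAt u u' 0) (hv : HasDerivAt v v' 0)
    (hpos : 0 < p 0) (hd : Real.sqrt (p 0) - q 0 ≠ 0) :
    HasDerivAt (fun t => phiF (p t) (q t) (u t) (v t))
      (phiD (p 0) (q 0) (u 0) (v 0) p' q' u' v') 0 := by
  have hs : 0 < Real.sqrt (p 0) := Real.sqrt_pos.mpr hpos
  have hsq := hp.sqrt hpos.ne'
  have hD := hsq.sub hq
  have h2s := hsq.const_mul (2 : ℝ)
  have h2sne : (fun t => 2 * Real.sqrt (p t)) 0 ≠ 0 := by
    simpa using (by positivity : (2 : ℝ) * Real.sqrt (p 0) ≠ 0)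
  have hfrac := hu.div h2s h2sne
  have hnum := (hu.mul hD).sub (hp.mul (hfrac.sub hv))
  have hpow := hD.pow 2
  have hpowne : (fun t => (Real.sqrt (p t) - q t) ^ 2) 0 ≠ 0 := by
    simpa using pow_ne_zero 2 hd
  have hdiv := hnum.div hpow hpowne
  have hfin := hdiv.add hv
  have : HasDerivAt (fun t => phiF (p t) (q t) (u t) (v t))
      (((u' * (Real.sqrt (p 0) - q 0) + u 0 * (p' / (2 * Real.sqrt (p 0)) - q') -
        (p' * (u 0 / (2 * Real.sqrt (p 0)) - v 0) +
          p 0 * ((u' * (2 * Real.sqrt (p 0)) - u 0 * (2 * (p' / (2 * Real.sqrt (p 0))))) / (2 * Real.sqrt (p 0)) ^ 2 - v'))) *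
        (Real.sqrt (p 0) - q 0) ^ 2 -
      (u 0 * (Real.sqrt (p 0) - q 0) - p 0 * (u 0 / (2 * Real.sqrt (p 0)) - v 0)) *
        ((2 : ℕ) * (Real.sqrt (p 0) - q 0) ^ (2 - 1) * (p' / (2 * Real.sqrt (p 0)) - q'))) /
      ((Real.sqrt (p 0) - q 0) ^ 2) ^ 2 + v') 0 := by
    exact hfin
  convert this using 1
  norm_num [phiD]
lemma phiF_linear (p q : ℝ) (hp : 0 < p) (hd : Real.sqrt p - q ≠ 0) (u v : ℝ) :
    phiF p q u v = u * ((Real.sqrt p - q) - p / (2 * Real.sqrt p)) / (Real.sqrt p - q) ^ 2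
      + v * (p / (Real.sqrt p - q) ^ 2 + 1) := by
  have hs : (0:ℝ) < Real.sqrt p := Real.sqrt_pos.mpr hp
  unfold phiF
  field_simp
  ring

lemma phiF_sum {n : ℕ} (p q : ℝ) (hp : 0 < p) (hd : Real.sqrt p - q ≠ 0)
    (u v w : Fin n → ℝ) :
    ∑ k, phiF p q (u k) (v k) * w k = phiF p q (∑ k, u k * w k) (∑ k, v k * w k) := by
  simp only [phiF_linear p q hp hd]
  rw [Finset.sum_congr rfl (fun k _ => by ring :
    ∀ k ∈ Finset.univ, (u k * ((Real.sqrt p - q) - p / (2 * Real.sqrt p)) / (Real.sqrt p - q) ^ 2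
      + v k * (p / (Real.sqrt p - q) ^ 2 + 1)) * w k
      = u k * w k * (((Real.sqrt p - q) - p / (2 * Real.sqrt p)) / (Real.sqrt p - q) ^ 2)
      + v k * w k * (p / (Real.sqrt p - q) ^ 2 + 1))]
  rw [Finset.sum_add_distrib, ← Finset.sum_mul, ← Finset.sum_mul]
  ring

lemma qf_sum {n : ℕ} (c : Fin n → Fin n → Fin n → ℝ) (w : Fin n → ℝ) (y : Fin n → ℝ) :
    ∑ k, qf (c k) y * w k = qf (fun i j => ∑ k, c k i j * w k) y := by
  unfold qf
  simp only [Finset.sum_mul]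
  rw [Finset.sum_comm]
  refine Finset.sum_congr rfl fun i _ => ?_
  rw [Finset.sum_comm]
  refine Finset.sum_congr rfl fun j _ => ?_
  refine Finset.sum_congr rfl fun k _ => ?_
  ring

lemma lf_sum {n : ℕ} (c : Fin n → Fin n → ℝ) (w : Fin n → ℝ) (y : Fin n → ℝ) :
    ∑ k, lf (c k) y * w k = lf (fun i => ∑ k, c k i * w k) y := by
  unfold lf
  simp only [Finset.sum_mul]
  rw [Finset.sum_comm]
  refine Finset.sum_congr rfl fun i _ => ?_
  refine Finset.sum_congr rfl fun k _ => ?_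
  ring

lemma final_algebra (Av Bv A0 B0 Al bl U V : ℝ) (hAv : 0 < Av)
    (hd : Real.sqrt Av - Bv ≠ 0)
    (h1 : A0 * Al = 0) (h3 : B0 * bl = 0) (h5 : Al * B0 + A0 * bl = 0) :
    phiD Av Bv A0 B0 Al bl U V - phiF Av Bv U V = 0 := by
  set s := Real.sqrt Av with hs_def
  have hs : 0 < s := Real.sqrt_pos.mpr hAv
  have hs2 : s ^ 2 = Av := Real.sq_sqrt hAv.le
  have key : phiD Av Bv A0 B0 Al bl U V - phiF Av Bv U V
      = ((A0 * Al) * ((s - Bv) / (4 * s) - 1 / 2 + Bv / s)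
        - (Al * B0 + A0 * bl) * Bv + (B0 * bl) * (2 * s ^ 2)) / (s - Bv) ^ 3 := by
    rw [phiD, phiF, ← hs_def, ← hs2]
    field_simp
    ring
  rw [key, h1, h3, h5]
  simp
lemma quadA_eq_qf {n : ℕ} (a : (Fin n → ℝ) → Fin n → Fin n → ℝ) (x0 : Fin n → ℝ) :
    quadA a x0 = qf (a x0) := rfl

lemma oneform_eq_lf {n : ℕ} (b : (Fin n → ℝ) → Fin n → ℝ) (x0 : Fin n → ℝ) :
    oneform b x0 = lf (b x0) := rfl

lemma diffAt_quadA_x {n : ℕ} (a : (Fin n → ℝ) → Fin n → Fin n → ℝ)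
    (ha : ∀ i j, ContDiff ℝ (⊤ : ℕ∞) (fun x => a x i j)) (x0 y : Fin n → ℝ) :
    DifferentiableAt ℝ (fun x' => quadA a x' y) x0 := by
  simp only [quadA]
  exact DifferentiableAt.fun_sum fun i _ => DifferentiableAt.fun_sum fun j _ =>
    ((((ha i j).differentiable (by simp)).differentiableAt.mul_const (y i)).mul_const (y j))

lemma diffAt_oneform_x {n : ℕ} (b : (Fin n → ℝ) → Fin n → ℝ)
    (hb : ∀ i, ContDiff ℝ (⊤ : ℕ∞) (fun x => b x i)) (x0 y : Fin n → ℝ) :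
    DifferentiableAt ℝ (fun x' => oneform b x' y) x0 := by
  simp only [oneform]
  exact DifferentiableAt.fun_sum fun i _ =>
    (((hb i).differentiable (by simp)).differentiableAt.mul_const (y i))

lemma hasDerivAt_quadA_line {n : ℕ} (a : (Fin n → ℝ) → Fin n → Fin n → ℝ)
    (ha : ∀ i j, ContDiff ℝ (⊤ : ℕ∞) (fun x => a x i j)) (x0 : Fin n → ℝ) (k : Fin n)
    (y : Fin n → ℝ) :
    HasDerivAt (fun t : ℝ => quadA a (x0 + t • (Pi.single k 1 : Fin n → ℝ)) y)
      (qf (fun i j => fderiv ℝ (fun x => a x i j) x0 (Pi.single k 1)) y) 0 := by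
  have key : HasDerivAt
      (fun t : ℝ => ∑ i, ∑ j, a (x0 + t • (Pi.single k 1 : Fin n → ℝ)) i j * y i * y j)
      (∑ i, ∑ j, fderiv ℝ (fun x => a x i j) x0 (Pi.single k 1) * y i * y j) 0 := by
    apply HasDerivAt.fun_sum; intro i _; apply HasDerivAt.fun_sum; intro j _
    exact ((hasDerivAt_comp_line (Pi.single k 1)
      ((ha i j).differentiable (by simp)).differentiableAt).mul_const (y i)).mul_const (y j)
  exact key

lemma hasDerivAt_oneform_line {n : ℕ} (b : (Fin n → ℝ) → Fin n → ℝ)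
    (hb : ∀ i, ContDiff ℝ (⊤ : ℕ∞) (fun x => b x i)) (x0 : Fin n → ℝ) (k : Fin n)
    (y : Fin n → ℝ) :
    HasDerivAt (fun t : ℝ => oneform b (x0 + t • (Pi.single k 1 : Fin n → ℝ)) y)
      (lf (fun i => fderiv ℝ (fun x => b x i) x0 (Pi.single k 1)) y) 0 := by
  have key : HasDerivAt
      (fun t : ℝ => ∑ i, b (x0 + t • (Pi.single k 1 : Fin n → ℝ)) i * y i)
      (∑ i, fderiv ℝ (fun x => b x i) x0 (Pi.single k 1) * y i) 0 := by
    apply HasDerivAt.fun_sum; intro i _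
    exact (hasDerivAt_comp_line (Pi.single k 1)
      ((hb i).differentiable (by simp)).differentiableAt).mul_const (y i)
  exact key

lemma pdx_quadA {n : ℕ} (a : (Fin n → ℝ) → Fin n → Fin n → ℝ)
    (ha : ∀ i j, ContDiff ℝ (⊤ : ℕ∞) (fun x => a x i j)) (x0 : Fin n → ℝ) (k : Fin n)
    (y : Fin n → ℝ) :
    pdx (quadA a) k x0 y = qf (fun i j => fderiv ℝ (fun x => a x i j) x0 (Pi.single k 1)) y :=
  (hasDerivAt_comp_line (Pi.single k 1) (diffAt_quadA_x a ha x0 y)).unique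
    (hasDerivAt_quadA_line a ha x0 k y)

lemma pdx_oneform {n : ℕ} (b : (Fin n → ℝ) → Fin n → ℝ)
    (hb : ∀ i, ContDiff ℝ (⊤ : ℕ∞) (fun x => b x i)) (x0 : Fin n → ℝ) (k : Fin n)
    (y : Fin n → ℝ) :
    pdx (oneform b) k x0 y = lf (fun i => fderiv ℝ (fun x => b x i) x0 (Pi.single k 1)) y :=
  (hasDerivAt_comp_line (Pi.single k 1) (diffAt_oneform_x b hb x0 y)).unique
    (hasDerivAt_oneform_line b hb x0 k y)
lemma diffAt_phiF {n : ℕ} (cA : Fin n → Fin n → ℝ) (cB : Fin n → ℝ)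
    (c : Fin n → Fin n → ℝ) (d : Fin n → ℝ) (y0 : Fin n → ℝ)
    (hpos : 0 < qf cA y0) (hd : Real.sqrt (qf cA y0) - lf cB y0 ≠ 0) :
    DifferentiableAt ℝ (fun y => phiF (qf cA y) (lf cB y) (qf c y) (lf d y)) y0 := by
  have hA := (qf_differentiable cA).differentiableAt (x := y0)
  have hB := (lf_differentiable cB).differentiableAt (x := y0)
  have hu := (qf_differentiable c).differentiableAt (x := y0)
  have hv := (lf_differentiable d).differentiableAt (x := y0)
  have hs : DifferentiableAt ℝ (fun y => Real.sqrt (qf cA y)) y0 := hA.sqrt hpos.ne'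
  have h2s : DifferentiableAt ℝ (fun y => 2 * Real.sqrt (qf cA y)) y0 := hs.const_mul 2
  have h2sne : 2 * Real.sqrt (qf cA y0) ≠ 0 := by
    have := Real.sqrt_pos.mpr hpos; positivity
  simp only [phiF, div_eq_mul_inv]
  have hnum : DifferentiableAt ℝ (fun y => qf c y * (Real.sqrt (qf cA y) - lf cB y)
      - qf cA y * (qf c y * (2 * Real.sqrt (qf cA y))⁻¹ - lf d y)) y0 :=
    (hu.mul (hs.sub hB)).sub (hA.mul ((hu.mul (h2s.inv h2sne)).sub hv))
  have hden2 : DifferentiableAt ℝ (fun y => ((Real.sqrt (qf cA y) - lf cB y) ^ 2)⁻¹) y0 :=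
    ((hs.sub hB).pow 2).inv (pow_ne_zero 2 hd)
  exact (hnum.mul hden2).add hv

lemma pdx_F {n : ℕ} (a : (Fin n → ℝ) → Fin n → Fin n → ℝ) (b : (Fin n → ℝ) → Fin n → ℝ)
    (ha : ∀ i j, ContDiff ℝ (⊤ : ℕ∞) (fun x => a x i j)) (hb : ∀ i, ContDiff ℝ (⊤ : ℕ∞) (fun x => b x i))
    (x0 : Fin n → ℝ) (k : Fin n) (y : Fin n → ℝ)
    (hpos : 0 < quadA a x0 y) (hd : Real.sqrt (quadA a x0 y) - oneform b x0 y ≠ 0) :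
    pdx (fun x y => quadA a x y / (Real.sqrt (quadA a x y) - oneform b x y) + oneform b x y)
        k x0 y
      = phiF (quadA a x0 y) (oneform b x0 y)
          (qf (fun i j => fderiv ℝ (fun x => a x i j) x0 (Pi.single k 1)) y)
          (lf (fun i => fderiv ℝ (fun x => b x i) x0 (Pi.single k 1)) y) := by
  have hAd := diffAt_quadA_x a ha x0 y
  have hBd := diffAt_oneform_x b hb x0 y
  have hFd : DifferentiableAt ℝ
      (fun x' => quadA a x' y / (Real.sqrt (quadA a x' y) - oneform b x' y) + oneform b x' y)
      x0 := by
    have hsd : DifferentiableAt ℝ (fun x' => Real.sqrt (quadA a x' y)) x0 := hAd.sqrt hpos.ne'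
    have hrw : (fun x' : Fin n → ℝ => quadA a x' y / (Real.sqrt (quadA a x' y) - oneform b x' y)
        + oneform b x' y)
        = (fun x' => quadA a x' y * (Real.sqrt (quadA a x' y) - oneform b x' y)⁻¹
          + oneform b x' y) := by
      funext x'; rw [div_eq_mul_inv]
    rw [hrw]
    exact (hAd.mul ((hsd.sub hBd).inv hd)).add hBd
  have hAl := hasDerivAt_quadA_line a ha x0 k y
  have hBl := hasDerivAt_oneform_line b hb x0 k y
  have hposl : (fun t : ℝ => quadA a (x0 + t • (Pi.single k 1 : Fin n → ℝ)) y) 0 ≠ 0 := by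
    simpa using hpos.ne'
  have hdl : (fun t : ℝ => Real.sqrt (quadA a (x0 + t • (Pi.single k 1 : Fin n → ℝ)) y)
      - oneform b (x0 + t • (Pi.single k 1 : Fin n → ℝ)) y) 0 ≠ 0 := by
    simpa using hd
  have hFl := (hAl.div ((hAl.sqrt hposl).sub hBl) hdl).add hBl
  have h0 : x0 + (0 : ℝ) • (Pi.single k 1 : Fin n → ℝ) = x0 := by simp
  rw [h0] at hFl
  have hcomp := hasDerivAt_comp_line (Pi.single k 1) hFd
  have := hcomp.unique hFl
  rw [phiF]
  simp only [Pi.sub_apply, zero_smul, add_zero] at this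
  exact this
theorem matsumotoRanders_projectively_flat {n : ℕ}
    (a : (Fin n → ℝ) → Fin n → Fin n → ℝ) (b : (Fin n → ℝ) → Fin n → ℝ)
    (ha : ∀ i j, ContDiff ℝ (⊤ : ℕ∞) (fun x => a x i j)) (hsym : ∀ x i j, a x i j = a x j i)
    (hb : ∀ i, ContDiff ℝ (⊤ : ℕ∞) (fun x => b x i))
    (x0 y0 : Fin n → ℝ) (hA : 0 < quadA a x0 y0)
    (hden : Real.sqrt (quadA a x0 y0) - oneform b x0 y0 ≠ 0)
    (h1 : ∀ l : Fin n, der0 (quadA a) x0 y0 * pdy (quadA a) l x0 y0 = 0)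
    (h2 : ∀ l : Fin n, der0l (quadA a) l x0 y0 = pdx (quadA a) l x0 y0)
    (h3 : ∀ l : Fin n, der0 (oneform b) x0 y0 * b x0 l = 0)
    (h4 : ∀ l : Fin n, der0l (oneform b) l x0 y0 = pdx (oneform b) l x0 y0)
    (h5 : ∀ l : Fin n,
      pdy (quadA a) l x0 y0 * der0 (oneform b) x0 y0
        + der0 (quadA a) x0 y0 * b x0 l = 0) :
    ∀ l : Fin n,
      der0l (fun x y => quadA a x y / (Real.sqrt (quadA a x y) - oneform b x y) + oneform b x y) l x0 y0
        - pdx (fun x y => quadA a x y / (Real.sqrt (quadA a x y) - oneform b x y) + oneform b x y) l x0 y0 = 0 := by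
  intro l
  have hpdxA : ∀ (k : Fin n) (y : Fin n → ℝ), pdx (quadA a) k x0 y = qf (fun i j => fderiv ℝ (fun x => a x i j) x0 (Pi.single k 1)) y :=
    fun k y => pdx_quadA a ha x0 k y
  have hpdxB : ∀ (k : Fin n) (y : Fin n → ℝ), pdx (oneform b) k x0 y = lf (fun i => fderiv ℝ (fun x => b x i) x0 (Pi.single k 1)) y :=
    fun k y => pdx_oneform b hb x0 k y
  have hcontA : Continuous (quadA a x0) := (qf_differentiable (a x0)).continuous
  have hcontB : Continuous (oneform b x0) := (lf_differentiable (b x0)).continuous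
  have hUopen : IsOpen {y : Fin n → ℝ |
      0 < quadA a x0 y ∧ Real.sqrt (quadA a x0 y) - oneform b x0 y ≠ 0} := by
    apply IsOpen.inter
    · exact isOpen_lt continuous_const hcontA
    · exact isOpen_ne_fun ((Real.continuous_sqrt.comp hcontA).sub hcontB) continuous_const
  have hU : ∀ᶠ y in nhds y0,
      0 < quadA a x0 y ∧ Real.sqrt (quadA a x0 y) - oneform b x0 y ≠ 0 :=
    hUopen.mem_nhds ⟨hA, hden⟩
  have hPhik : ∀ k : Fin n, DifferentiableAt ℝ (fun y => phiF (quadA a x0 y) (oneform b x0 y) (qf (fun i j => fderiv ℝ (fun x => a x i j) x0 (Pi.single k 1)) y) (lf (fun i => fderiv ℝ (fun x => b x i) x0 (Pi.single k 1)) y)) y0 :=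
    fun k => diffAt_phiF (a x0) (b x0) _ _ y0 hA hden
  have hEv : ∀ k : Fin n,
      (fun y' => pdx (fun x y => quadA a x y / (Real.sqrt (quadA a x y) - oneform b x y) + oneform b x y) k x0 y') =ᶠ[nhds y0] (fun y => phiF (quadA a x0 y) (oneform b x0 y) (qf (fun i j => fderiv ℝ (fun x => a x i j) x0 (Pi.single k 1)) y) (lf (fun i => fderiv ℝ (fun x => b x i) x0 (Pi.single k 1)) y)) :=
    fun k => hU.mono (fun y hy => pdx_F a b ha hb x0 k y hy.1 hy.2)
  have hterm : ∀ k : Fin n, pdy (pdx (fun x y => quadA a x y / (Real.sqrt (quadA a x y) - oneform b x y) + oneform b x y) k) l x0 y0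
      = fderiv ℝ (fun y => phiF (quadA a x0 y) (oneform b x0 y) (qf (fun i j => fderiv ℝ (fun x => a x i j) x0 (Pi.single k 1)) y) (lf (fun i => fderiv ℝ (fun x => b x i) x0 (Pi.single k 1)) y)) y0 (Pi.single l 1) := by
    intro k
    show fderiv ℝ (fun y' => pdx (fun x y => quadA a x y / (Real.sqrt (quadA a x y) - oneform b x y) + oneform b x y) k x0 y') y0 (Pi.single l 1) = _
    rw [(hEv k).fderiv_eq]
  have hsumD := HasFDerivAt.fun_sum (u := (Finset.univ : Finset (Fin n)))
    (fun k _ => ((hPhik k).hasFDerivAt.mul_const (y0 k)))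
  have hstep1 : der0l (fun x y => quadA a x y / (Real.sqrt (quadA a x y) - oneform b x y) + oneform b x y) l x0 y0
      = fderiv ℝ (fun y => ∑ k, phiF (quadA a x0 y) (oneform b x0 y) (qf (fun i j => fderiv ℝ (fun x => a x i j) x0 (Pi.single k 1)) y) (lf (fun i => fderiv ℝ (fun x => b x i) x0 (Pi.single k 1)) y) * y0 k) y0 (Pi.single l 1) := by
    simp only [der0l, hterm]
    rw [hsumD.fderiv]
    rw [ContinuousLinearMap.sum_apply]
    simp only [ContinuousLinearMap.smul_apply, smul_eq_mul]
    exact Finset.sum_congr rfl fun k _ => mul_comm _ _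
  have hcol : (fun y => ∑ k, phiF (quadA a x0 y) (oneform b x0 y) (qf (fun i j => fderiv ℝ (fun x => a x i j) x0 (Pi.single k 1)) y) (lf (fun i => fderiv ℝ (fun x => b x i) x0 (Pi.single k 1)) y) * y0 k) =ᶠ[nhds y0] (fun y => phiF (quadA a x0 y) (oneform b x0 y) (qf (fun i j => ∑ k, fderiv ℝ (fun x => a x i j) x0 (Pi.single k 1) * y0 k) y) (lf (fun i => ∑ k, fderiv ℝ (fun x => b x i) x0 (Pi.single k 1) * y0 k) y)) :=
    hU.mono (fun y hy => by
      beta_reduce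
      rw [phiF_sum _ _ hy.1 hy.2, qf_sum, lf_sum])
  have hstep2 : fderiv ℝ (fun y => ∑ k, phiF (quadA a x0 y) (oneform b x0 y) (qf (fun i j => fderiv ℝ (fun x => a x i j) x0 (Pi.single k 1)) y) (lf (fun i => fderiv ℝ (fun x => b x i) x0 (Pi.single k 1)) y) * y0 k) y0 = fderiv ℝ (fun y => phiF (quadA a x0 y) (oneform b x0 y) (qf (fun i j => ∑ k, fderiv ℝ (fun x => a x i j) x0 (Pi.single k 1) * y0 k) y) (lf (fun i => ∑ k, fderiv ℝ (fun x => b x i) x0 (Pi.single k 1) * y0 k) y)) y0 := hcol.fderiv_eq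
  have hPsid : DifferentiableAt ℝ (fun y => phiF (quadA a x0 y) (oneform b x0 y) (qf (fun i j => ∑ k, fderiv ℝ (fun x => a x i j) x0 (Pi.single k 1) * y0 k) y) (lf (fun i => ∑ k, fderiv ℝ (fun x => b x i) x0 (Pi.single k 1) * y0 k) y)) y0 := diffAt_phiF (a x0) (b x0) (fun i j => ∑ k, fderiv ℝ (fun x => a x i j) x0 (Pi.single k 1) * y0 k) (fun i => ∑ k, fderiv ℝ (fun x => b x i) x0 (Pi.single k 1) * y0 k) y0 hA hden
  have hgA : HasDerivAt (fun t : ℝ => quadA a x0 (y0 + t • (Pi.single l 1 : Fin n → ℝ)))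
      (pdy (quadA a) l x0 y0) 0 :=
    hasDerivAt_comp_line (Pi.single l 1) ((qf_differentiable (a x0)).differentiableAt)
  have hgB : HasDerivAt (fun t : ℝ => oneform b x0 (y0 + t • (Pi.single l 1 : Fin n → ℝ)))
      (b x0 l) 0 := lf_line (b x0) y0 l
  have hgU : HasDerivAt (fun t : ℝ => qf (fun i j => ∑ k, fderiv ℝ (fun x => a x i j) x0 (Pi.single k 1) * y0 k) (y0 + t • (Pi.single l 1 : Fin n → ℝ)))
      ((∑ j, (∑ k, fderiv ℝ (fun x => a x l j) x0 (Pi.single k 1) * y0 k) * y0 j)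
        + (∑ i, (∑ k, fderiv ℝ (fun x => a x i l) x0 (Pi.single k 1) * y0 k) * y0 i)) 0 :=
    qf_line (fun i j => ∑ k, fderiv ℝ (fun x => a x i j) x0 (Pi.single k 1) * y0 k) y0 l
  have hgV : HasDerivAt (fun t : ℝ => lf (fun i => ∑ k, fderiv ℝ (fun x => b x i) x0 (Pi.single k 1) * y0 k) (y0 + t • (Pi.single l 1 : Fin n → ℝ)))
      (∑ k, fderiv ℝ (fun x => b x l) x0 (Pi.single k 1) * y0 k) 0 := lf_line (fun i => ∑ k, fderiv ℝ (fun x => b x i) x0 (Pi.single k 1) * y0 k) y0 l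
  have hmain := phiF_hasDerivAt hgA hgB hgU hgV (by simpa using hA) (by simpa using hden)
  have h00 : y0 + (0 : ℝ) • (Pi.single l 1 : Fin n → ℝ) = y0 := by simp
  simp only [h00] at hmain
  have hfd3 : fderiv ℝ (fun y => phiF (quadA a x0 y) (oneform b x0 y) (qf (fun i j => ∑ k, fderiv ℝ (fun x => a x i j) x0 (Pi.single k 1) * y0 k) y) (lf (fun i => ∑ k, fderiv ℝ (fun x => b x i) x0 (Pi.single k 1) * y0 k) y)) y0 (Pi.single l 1)
      = phiD (quadA a x0 y0) (oneform b x0 y0) (qf (fun i j => ∑ k, fderiv ℝ (fun x => a x i j) x0 (Pi.single k 1) * y0 k) y0) (lf (fun i => ∑ k, fderiv ℝ (fun x => b x i) x0 (Pi.single k 1) * y0 k) y0)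
          (pdy (quadA a) l x0 y0) (b x0 l)
          ((∑ j, (∑ k, fderiv ℝ (fun x => a x l j) x0 (Pi.single k 1) * y0 k) * y0 j)
            + (∑ i, (∑ k, fderiv ℝ (fun x => a x i l) x0 (Pi.single k 1) * y0 k) * y0 i))
          (∑ k, fderiv ℝ (fun x => b x l) x0 (Pi.single k 1) * y0 k) :=
    (hasDerivAt_comp_line (Pi.single l 1) hPsid).unique hmain
  have hqc0 : qf (fun i j => ∑ k, fderiv ℝ (fun x => a x i j) x0 (Pi.single k 1) * y0 k) y0 = der0 (quadA a) x0 y0 := by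
    rw [der0]
    simp only [hpdxA]
    exact (qf_sum _ y0 y0).symm
  have hld0 : lf (fun i => ∑ k, fderiv ℝ (fun x => b x i) x0 (Pi.single k 1) * y0 k) y0 = der0 (oneform b) x0 y0 := by
    rw [der0]
    simp only [hpdxB]
    exact (lf_sum _ y0 y0).symm
  have hpdyAk : ∀ k : Fin n, pdy (pdx (quadA a) k) l x0 y0
      = (∑ j, fderiv ℝ (fun x => a x l j) x0 (Pi.single k 1) * y0 j)
        + (∑ i, fderiv ℝ (fun x => a x i l) x0 (Pi.single k 1) * y0 i) := by
    intro k
    have hfun : (fun y' => pdx (quadA a) k x0 y') = qf (fun i j => fderiv ℝ (fun x => a x i j) x0 (Pi.single k 1)) := funext (hpdxA k)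
    show fderiv ℝ (fun y' => pdx (quadA a) k x0 y') y0 (Pi.single l 1) = _
    rw [hfun]
    exact (hasDerivAt_comp_line (Pi.single l 1)
      ((qf_differentiable _).differentiableAt)).unique (qf_line _ y0 l)
  have hpdyBk : ∀ k : Fin n, pdy (pdx (oneform b) k) l x0 y0
      = fderiv ℝ (fun x => b x l) x0 (Pi.single k 1) := by
    intro k
    have hfun : (fun y' => pdx (oneform b) k x0 y') = lf (fun i => fderiv ℝ (fun x => b x i) x0 (Pi.single k 1)) := funext (hpdxB k)
    show fderiv ℝ (fun y' => pdx (oneform b) k x0 y') y0 (Pi.single l 1) = _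
    rw [hfun]
    exact (hasDerivAt_comp_line (Pi.single l 1)
      ((lf_differentiable _).differentiableAt)).unique (lf_line _ y0 l)
  have hSc0 : (∑ j, (∑ k, fderiv ℝ (fun x => a x l j) x0 (Pi.single k 1) * y0 k) * y0 j)
        + (∑ i, (∑ k, fderiv ℝ (fun x => a x i l) x0 (Pi.single k 1) * y0 k) * y0 i)
      = qf (fun i j => fderiv ℝ (fun x => a x i j) x0 (Pi.single l 1)) y0 := by
    rw [← hpdxA l y0, ← h2 l, der0l]
    simp only [hpdyAk]
    simp only [add_mul, Finset.sum_add_distrib, Finset.sum_mul]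
    congr 1
    · rw [Finset.sum_comm]
      exact Finset.sum_congr rfl fun j _ => Finset.sum_congr rfl fun k _ => by ring
    · rw [Finset.sum_comm]
      exact Finset.sum_congr rfl fun i _ => Finset.sum_congr rfl fun k _ => by ring
  have hd0l : (∑ k, fderiv ℝ (fun x => b x l) x0 (Pi.single k 1) * y0 k)
      = lf (fun i => fderiv ℝ (fun x => b x i) x0 (Pi.single l 1)) y0 := by
    rw [← hpdxB l y0, ← h4 l, der0l]
    simp only [hpdyBk]
  have hlast : pdx (fun x y => quadA a x y / (Real.sqrt (quadA a x y) - oneform b x y) + oneform b x y) l x0 y0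
      = phiF (quadA a x0 y0) (oneform b x0 y0) (qf (fun i j => fderiv ℝ (fun x => a x i j) x0 (Pi.single l 1)) y0) (lf (fun i => fderiv ℝ (fun x => b x i) x0 (Pi.single l 1)) y0) :=
    pdx_F a b ha hb x0 l y0 hA hden
  rw [hstep1, hstep2, hfd3, hlast, hqc0, hld0, hSc0, hd0l]
  exact final_algebra _ _ _ _ _ _ _ _ hA hden (h1 l) (h3 l) (h5 l)
end

section
/- With A = a_{ij}(x)y^i y^j, β = b_i(x)y^i smooth, A > 0, β − √A ≠ 0, let F̄ = β²/(β − √A) + β (infinite-series–Randers change). If A₀A_ℓ = 0, A_{0ℓ} = A_{x^ℓ}, β₀β_ℓ = 0, β_{0ℓ} = β_{x^ℓ}, and A_ℓβ₀ + A₀β_ℓ = 0 for all ℓ, then F̄ satisfies Hamel's equation F̄_{x^k y^ℓ}y^k − F̄_{x^ℓ} = 0. -/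
open scoped BigOperators

open ContinuousLinearMap in
lemma aux_oneform_x {n : ℕ} (b : (Fin n → ℝ) → Fin n → ℝ)
    (hb : ∀ i, ContDiff ℝ (⊤ : ℕ∞) (fun x => b x i)) (x0 y : Fin n → ℝ) :
    HasFDerivAt (fun x' => oneform b x' y)
      (∑ i, y i • fderiv ℝ (fun x => b x i) x0) x0 := by
  unfold oneform
  exact HasFDerivAt.fun_sum fun i _ =>
    (((hb i).differentiable (by simp) x0).hasFDerivAt.mul_const (y i))

set_option maxHeartbeats 2000000 in
open ContinuousLinearMap in
lemma aux_quadA_x {n : ℕ} (a : (Fin n → ℝ) → Fin n → Fin n → ℝ)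
    (ha : ∀ i j, ContDiff ℝ (⊤ : ℕ∞) (fun x => a x i j)) (x0 y : Fin n → ℝ) :
    HasFDerivAt (fun x' => quadA a x' y)
      (∑ i, ∑ j, (y i * y j) • fderiv ℝ (fun x => a x i j) x0) x0 := by
  unfold quadA
  refine HasFDerivAt.fun_sum fun i _ => HasFDerivAt.fun_sum fun j _ => ?_
  have h := (((ha i j).differentiable (by simp) x0).hasFDerivAt.mul_const (y i)).mul_const (y j)
  rw [smul_smul, mul_comm (y j)] at h
  exact h

set_option maxHeartbeats 2000000 in
open ContinuousLinearMap in
lemma aux_oneform_y {n : ℕ} (b : (Fin n → ℝ) → Fin n → ℝ) (x0 y0 : Fin n → ℝ) :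
    HasFDerivAt (fun y' => oneform b x0 y')
      (∑ i, b x0 i • (proj i : ((Fin n → ℝ) →L[ℝ] ℝ))) y0 := by
  unfold oneform
  exact HasFDerivAt.fun_sum fun i _ =>
    ((proj i : ((Fin n → ℝ) →L[ℝ] ℝ)).hasFDerivAt (x := y0)).const_mul (b x0 i)

set_option maxHeartbeats 2000000 in
open ContinuousLinearMap in
lemma aux_quadA_y {n : ℕ} (a : (Fin n → ℝ) → Fin n → Fin n → ℝ) (x0 y0 : Fin n → ℝ) :
    HasFDerivAt (fun y' => quadA a x0 y')
      (∑ i, ∑ j, ((a x0 i j * y0 i) • (proj j : ((Fin n → ℝ) →L[ℝ] ℝ))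
        + y0 j • (a x0 i j • (proj i : ((Fin n → ℝ) →L[ℝ] ℝ))))) y0 := by
  unfold quadA
  refine HasFDerivAt.fun_sum fun i _ => HasFDerivAt.fun_sum fun j _ => ?_
  exact (((proj i : ((Fin n → ℝ) →L[ℝ] ℝ)).hasFDerivAt (x := y0)).const_mul
    (a x0 i j)).mul ((proj j : ((Fin n → ℝ) →L[ℝ] ℝ)).hasFDerivAt (x := y0))

open ContinuousLinearMap

set_option maxHeartbeats 2000000

theorem infiniteSeriesRanders_projectively_flat {n : ℕ}
    (a : (Fin n → ℝ) → Fin n → Fin n → ℝ) (b : (Fin n → ℝ) → Fin n → ℝ)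
    (ha : ∀ i j, ContDiff ℝ (⊤ : ℕ∞) (fun x => a x i j)) (hsym : ∀ x i j, a x i j = a x j i)
    (hb : ∀ i, ContDiff ℝ (⊤ : ℕ∞) (fun x => b x i))
    (x0 y0 : Fin n → ℝ) (hA : 0 < quadA a x0 y0)
    (hden : oneform b x0 y0 - Real.sqrt (quadA a x0 y0) ≠ 0)
    (h1 : ∀ l : Fin n, der0 (quadA a) x0 y0 * pdy (quadA a) l x0 y0 = 0)
    (h2 : ∀ l : Fin n, der0l (quadA a) l x0 y0 = pdx (quadA a) l x0 y0)
    (h3 : ∀ l : Fin n, der0 (oneform b) x0 y0 * b x0 l = 0)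
    (h4 : ∀ l : Fin n, der0l (oneform b) l x0 y0 = pdx (oneform b) l x0 y0)
    (h5 : ∀ l : Fin n,
      pdy (quadA a) l x0 y0 * der0 (oneform b) x0 y0
        + der0 (quadA a) x0 y0 * b x0 l = 0) :
    ∀ l : Fin n,
      der0l (fun x y => (oneform b x y) ^ 2 / (oneform b x y - Real.sqrt (quadA a x y)) + oneform b x y) l x0 y0
        - pdx (fun x y => (oneform b x y) ^ 2 / (oneform b x y - Real.sqrt (quadA a x y)) + oneform b x y) l x0 y0 = 0 := by
  intro l
  classical
  set F : (Fin n → ℝ) → (Fin n → ℝ) → ℝ :=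
    fun x y => (oneform b x y) ^ 2 / (oneform b x y - Real.sqrt (quadA a x y)) + oneform b x y
    with hF_def
  set φ : ℝ × ℝ → ℝ := fun p => p.1 ^ 2 / (p.1 - Real.sqrt p.2) + p.1 with hφ_def
  set P : (Fin n → ℝ) → ℝ × ℝ := fun y => (oneform b x0 y, quadA a x0 y) with hP_def
  set S : Set (ℝ × ℝ) := {p | 0 < p.2} ∩ {p | p.1 - Real.sqrt p.2 ≠ 0} with hS_def
  have hSopen : IsOpen S := by
    apply IsOpen.inter
    · exact isOpen_lt continuous_const continuous_snd
    · exact isOpen_ne.preimage (continuous_fst.sub (Real.continuous_sqrt.comp continuous_snd))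
  have hp0S : P y0 ∈ S := ⟨hA, hden⟩
  have hφS : ∀ p ∈ S, ContDiffAt ℝ (⊤ : ℕ∞) φ p := by
    intro p hp
    have hden' : ContDiffAt ℝ (⊤ : ℕ∞) (fun q : ℝ × ℝ => q.1 - Real.sqrt q.2) p :=
      contDiffAt_fst.sub ((Real.contDiffAt_sqrt (ne_of_gt hp.1)).comp p contDiffAt_snd)
    exact ((contDiffAt_fst.pow 2).div hden' hp.2).add contDiffAt_fst
  -- derivative data
  set Db : Fin n → ((Fin n → ℝ) →L[ℝ] ℝ) := fun i => fderiv ℝ (fun x => b x i) x0 with hDb_def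
  set Da : Fin n → Fin n → ((Fin n → ℝ) →L[ℝ] ℝ) := fun i j => fderiv ℝ (fun x => a x i j) x0
    with hDa_def
  have hux : ∀ y, HasFDerivAt (fun x' => oneform b x' y) (∑ i, y i • Db i) x0 :=
    fun y => aux_oneform_x b hb x0 y
  have hAx : ∀ y, HasFDerivAt (fun x' => quadA a x' y) (∑ i, ∑ j, (y i * y j) • Da i j) x0 :=
    fun y => aux_quadA_x a ha x0 y
  set Lu : (Fin n → ℝ) →L[ℝ] ℝ := ∑ i, b x0 i • (proj i : ((Fin n → ℝ) →L[ℝ] ℝ)) with hLu_def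
  set LA : (Fin n → ℝ) →L[ℝ] ℝ :=
    ∑ i, ∑ j, ((a x0 i j * y0 i) • (proj j : ((Fin n → ℝ) →L[ℝ] ℝ))
      + y0 j • (a x0 i j • (proj i : ((Fin n → ℝ) →L[ℝ] ℝ)))) with hLA_def
  have huy : HasFDerivAt (fun y' => oneform b x0 y') Lu y0 := aux_oneform_y b x0 y0
  have hAy : HasFDerivAt (fun y' => quadA a x0 y') LA y0 := aux_quadA_y a x0 y0
  have hPy : HasFDerivAt P (Lu.prod LA) y0 := huy.prodMk hAy
  have hev : ∀ᶠ y' in nhds y0, P y' ∈ S :=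
    hPy.differentiableAt.continuousAt.eventually_mem (hSopen.mem_nhds hp0S)
  -- the key chain-rule formula for pdx F
  have key : ∀ (k : Fin n) (y' : Fin n → ℝ), P y' ∈ S →
      pdx F k x0 y' = fderiv ℝ φ (P y')
        ((∑ i, y' i • Db i) (Pi.single k 1), (∑ i, ∑ j, (y' i * y' j) • Da i j) (Pi.single k 1)) := by
    intro k y' hy'
    have hG : HasFDerivAt (fun x' => ((oneform b x' y', quadA a x' y') : ℝ × ℝ))
        ((∑ i, y' i • Db i).prod (∑ i, ∑ j, (y' i * y' j) • Da i j)) x0 :=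
      (hux y').prodMk (hAx y')
    have hφd : HasFDerivAt φ (fderiv ℝ φ (P y')) (P y') :=
      ((hφS _ hy').differentiableAt (by simp)).hasFDerivAt
    have hcomp : HasFDerivAt (fun x' => F x' y')
        ((fderiv ℝ φ (P y')).comp
          ((∑ i, y' i • Db i).prod (∑ i, ∑ j, (y' i * y' j) • Da i j))) x0 :=
      HasFDerivAt.comp (g := φ) x0 hφd hG
    rw [pdx, hcomp.fderiv]
    simp
  -- second derivative data
  have hcφ : ContDiffAt ℝ (⊤ : ℕ∞) φ (P y0) := hφS _ hp0S
  set D2 : (ℝ × ℝ) →L[ℝ] ((ℝ × ℝ) →L[ℝ] ℝ) := fderiv ℝ (fderiv ℝ φ) (P y0) with hD2_def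
  have hD2 : HasFDerivAt (fderiv ℝ φ) D2 (P y0) :=
    ((hcφ.fderiv_right (m := 1) (WithTop.coe_le_coe.mpr le_top)).differentiableAt one_ne_zero).hasFDerivAt
  have hc : HasFDerivAt (fun y' => fderiv ℝ φ (P y')) (D2.comp (Lu.prod LA)) y0 :=
    HasFDerivAt.comp y0 hD2 hPy
  -- per-k second derivative formula
  have main : ∀ k : Fin n, pdy (pdx F k) l x0 y0 =
      fderiv ℝ φ (P y0) (pdy (pdx (oneform b) k) l x0 y0, pdy (pdx (quadA a) k) l x0 y0)
        + D2 (pdy (oneform b) l x0 y0, pdy (quadA a) l x0 y0)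
            (pdx (oneform b) k x0 y0, pdx (quadA a) k x0 y0) := by
    intro k
    set c : Fin n → ℝ := fun i => Db i (Pi.single k 1) with hc_def
    set d : Fin n → Fin n → ℝ := fun i j => Da i j (Pi.single k 1) with hd_def
    have hh1 : HasFDerivAt (fun y' : Fin n → ℝ => ∑ i, y' i * c i)
        (∑ i, c i • (proj i : ((Fin n → ℝ) →L[ℝ] ℝ))) y0 :=
      HasFDerivAt.fun_sum fun i _ =>
        ((proj i : ((Fin n → ℝ) →L[ℝ] ℝ)).hasFDerivAt (x := y0)).mul_const (c i)
    have hh2 : HasFDerivAt (fun y' : Fin n → ℝ => ∑ i, ∑ j, (y' i * y' j) * d i j)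
        (∑ i, ∑ j, d i j • (y0 i • (proj j : ((Fin n → ℝ) →L[ℝ] ℝ))
          + y0 j • (proj i : ((Fin n → ℝ) →L[ℝ] ℝ)))) y0 :=
      HasFDerivAt.fun_sum fun i _ => HasFDerivAt.fun_sum fun j _ =>
        (((proj i : ((Fin n → ℝ) →L[ℝ] ℝ)).hasFDerivAt (x := y0)).mul
          ((proj j : ((Fin n → ℝ) →L[ℝ] ℝ)).hasFDerivAt (x := y0))).mul_const (d i j)
    have hh : HasFDerivAt
        (fun y' : Fin n → ℝ => ((∑ i, y' i * c i, ∑ i, ∑ j, (y' i * y' j) * d i j) : ℝ × ℝ))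
        ((∑ i, c i • (proj i : ((Fin n → ℝ) →L[ℝ] ℝ))).prod
          (∑ i, ∑ j, d i j • (y0 i • (proj j : ((Fin n → ℝ) →L[ℝ] ℝ))
            + y0 j • (proj i : ((Fin n → ℝ) →L[ℝ] ℝ))))) y0 := hh1.prodMk hh2
    set Φ : (Fin n → ℝ) → ℝ := fun y' =>
      fderiv ℝ φ (P y') (∑ i, y' i * c i, ∑ i, ∑ j, (y' i * y' j) * d i j) with hΦ_def
    have hΦ : HasFDerivAt Φ
        ((fderiv ℝ φ (P y0)).comp
            ((∑ i, c i • (proj i : ((Fin n → ℝ) →L[ℝ] ℝ))).prod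
              (∑ i, ∑ j, d i j • (y0 i • (proj j : ((Fin n → ℝ) →L[ℝ] ℝ))
                + y0 j • (proj i : ((Fin n → ℝ) →L[ℝ] ℝ)))))
          + (D2.comp (Lu.prod LA)).flip (∑ i, y0 i * c i, ∑ i, ∑ j, (y0 i * y0 j) * d i j)) y0 :=
      HasFDerivAt.clm_apply hc hh
    have hEq : (fun y' => pdx F k x0 y') =ᶠ[nhds y0] Φ := by
      filter_upwards [hev] with y' hy'
      rw [key k y' hy', hΦ_def]
      simp [hc_def, hd_def]
    -- value identifications
    have hval1 : pdy (pdx (oneform b) k) l x0 y0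
        = (∑ i, c i • (proj i : ((Fin n → ℝ) →L[ℝ] ℝ))) (Pi.single l 1) := by
      have hfun : (fun y' => pdx (oneform b) k x0 y') = fun y' : Fin n → ℝ => ∑ i, y' i * c i := by
        funext y'
        rw [pdx, (hux y').fderiv]
        simp [hc_def]
      rw [pdy, hfun, hh1.fderiv]
    have hval2 : pdy (pdx (quadA a) k) l x0 y0
        = (∑ i, ∑ j, d i j • (y0 i • (proj j : ((Fin n → ℝ) →L[ℝ] ℝ))
            + y0 j • (proj i : ((Fin n → ℝ) →L[ℝ] ℝ)))) (Pi.single l 1) := by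
      have hfun : (fun y' => pdx (quadA a) k x0 y')
          = fun y' : Fin n → ℝ => ∑ i, ∑ j, (y' i * y' j) * d i j := by
        funext y'
        rw [pdx, (hAx y').fderiv]
        simp [hd_def]
      rw [pdy, hfun, hh2.fderiv]
    have hval3 : pdy (oneform b) l x0 y0 = Lu (Pi.single l 1) := by
      rw [pdy, huy.fderiv]
    have hval4 : pdy (quadA a) l x0 y0 = LA (Pi.single l 1) := by
      rw [pdy, hAy.fderiv]
    have hval5 : pdx (oneform b) k x0 y0 = ∑ i, y0 i * c i := by
      rw [pdx, (hux y0).fderiv]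
      simp [hc_def]
    have hval6 : pdx (quadA a) k x0 y0 = ∑ i, ∑ j, (y0 i * y0 j) * d i j := by
      rw [pdx, (hAx y0).fderiv]
      simp [hd_def]
    rw [pdy, hEq.fderiv_eq, hΦ.fderiv, hval1, hval2, hval3, hval4, hval5, hval6]
    simp
  -- summation over k
  have hder0l : der0l F l x0 y0 =
      fderiv ℝ φ (P y0) (der0l (oneform b) l x0 y0, der0l (quadA a) l x0 y0)
        + D2 (pdy (oneform b) l x0 y0, pdy (quadA a) l x0 y0)
            (der0 (oneform b) x0 y0, der0 (quadA a) x0 y0) := by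
    have hsum : ∀ p q : Fin n → ℝ,
        (∑ k, y0 k • ((p k, q k) : ℝ × ℝ)) = (∑ k, p k * y0 k, ∑ k, q k * y0 k) := by
      intro p q
      refine Prod.ext ?_ ?_ <;> simp [Prod.fst_sum, Prod.snd_sum, mul_comm]
    rw [der0l]
    calc (∑ k, pdy (pdx F k) l x0 y0 * y0 k)
        = ∑ k, (fderiv ℝ φ (P y0)
              (y0 k • ((pdy (pdx (oneform b) k) l x0 y0, pdy (pdx (quadA a) k) l x0 y0) : ℝ × ℝ))
            + D2 (pdy (oneform b) l x0 y0, pdy (quadA a) l x0 y0)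
              (y0 k • ((pdx (oneform b) k x0 y0, pdx (quadA a) k x0 y0) : ℝ × ℝ))) := by
          refine Finset.sum_congr rfl fun k _ => ?_
          rw [main k]
          simp only [map_smul, smul_eq_mul]
          ring
      _ = fderiv ℝ φ (P y0)
            (∑ k, y0 k • ((pdy (pdx (oneform b) k) l x0 y0, pdy (pdx (quadA a) k) l x0 y0) : ℝ × ℝ))
          + D2 (pdy (oneform b) l x0 y0, pdy (quadA a) l x0 y0)
            (∑ k, y0 k • ((pdx (oneform b) k x0 y0, pdx (quadA a) k x0 y0) : ℝ × ℝ)) := by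
          rw [Finset.sum_add_distrib, map_sum, map_sum]
      _ = _ := by
          rw [hsum, hsum, der0l, der0l, der0, der0]
  -- the first-derivative term
  have hpdxF : pdx F l x0 y0
      = fderiv ℝ φ (P y0) (pdx (oneform b) l x0 y0, pdx (quadA a) l x0 y0) := by
    rw [key l y0 hp0S, pdx, pdx, (hux y0).fderiv, (hAx y0).fderiv]
  -- pdy of oneform is b
  have hbl : pdy (oneform b) l x0 y0 = b x0 l := by
    rw [pdy, huy.fderiv, hLu_def]
    simp [Pi.single_apply]
  -- symmetry of the second derivative
  have hsymm : D2 ((1:ℝ), (0:ℝ)) ((0:ℝ), (1:ℝ)) = D2 ((0:ℝ), (1:ℝ)) ((1:ℝ), (0:ℝ)) := by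
    have := (hcφ.isSymmSndFDerivAt (by simp; exact WithTop.coe_le_coe.mpr le_top)) ((1:ℝ), (0:ℝ)) ((0:ℝ), (1:ℝ))
    rw [← hD2_def] at this
    exact this
  -- bilinear expansion
  have hexp : ∀ p q r s : ℝ, D2 (p, q) (r, s)
      = p * r * D2 (1,0) (1,0) + p * s * D2 (1,0) (0,1)
        + q * r * D2 (0,1) (1,0) + q * s * D2 (0,1) (0,1) := by
    intro p q r s
    have e1 : ((p, q) : ℝ × ℝ) = p • ((1:ℝ), (0:ℝ)) + q • ((0:ℝ), (1:ℝ)) := by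
      simp [Prod.ext_iff]
    have e2 : ((r, s) : ℝ × ℝ) = r • ((1:ℝ), (0:ℝ)) + s • ((0:ℝ), (1:ℝ)) := by
      simp [Prod.ext_iff]
    rw [e1, e2]
    simp only [map_add, map_smul, ContinuousLinearMap.add_apply,
      ContinuousLinearMap.smul_apply, smul_eq_mul]
    ring
  -- put everything together
  rw [hder0l, h4 l, h2 l, hpdxF, hbl, hexp]
  linear_combination D2 (1,0) (1,0) * h3 l + D2 (1,0) (0,1) * h5 l + D2 (0,1) (0,1) * h1 l
    - (pdy (quadA a) l x0 y0 * der0 (oneform b) x0 y0) * hsymm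
end
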